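/- arXiv:1406.6299 — 6 statements merged into one kernel-verified Lean document; each statement's English description precedes it below -/
import Mathlib

section
/- Let $F$ be an algebraically closed field of characteristic $p > 0$, $G = Z_{p^r}$ a cyclic group acting on $V = \bigoplus_{j=1}^k V_{n_j}$ (sum of indecomposable Jordan-block modules of dimensions $n_j \le p^r$ with basis $e_{1,j},\dots,e_{n_j,j}$). Let $v = \sum_{j=1}^k c_j e_{n_j,j}$ be a nonzero fixed point, $J = \{ j : c_j \neq 0 \}$, and let $s$ be the maximal integer such that $p^{s-1} < n_j$ for all $j \in J$. Then $\epsilon(G, v) = p^s$, i.e., the minimal positive degree $d$ such that some homogeneous invariant $f \in F[V]^G_d$ satisfies $f(v) \neq 0$ equals $p^s$. -/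
open MvPolynomial

/-- The action of the generator `σ` of the cyclic group on the polynomial ring of
`V = ⊕_j V_{n j}`: `σ(x_{i,j}) = x_{i,j} + x_{i-1,j}`, `σ(x_{1,j}) = x_{1,j}`. -/
noncomputable def sigmaAct {F : Type*} [Field F] {k : ℕ} (n : Fin k → ℕ) :
    MvPolynomial (Σ j : Fin k, Fin (n j)) F →ₐ[F] MvPolynomial (Σ j : Fin k, Fin (n j)) F :=
  aeval fun q => X q + if _ : 0 < (q.2 : ℕ) then
    X ⟨q.1, ⟨(q.2 : ℕ) - 1, lt_of_le_of_lt (Nat.sub_le _ _) q.2.isLt⟩⟩ else 0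

/-- `ε(G,v)`: the minimal positive degree `d` of a homogeneous invariant `f` with
`f(v) ≠ 0` (invariance under the cyclic group = invariance under the generator). -/
noncomputable def epsCyc {F : Type*} [Field F] {k : ℕ} (n : Fin k → ℕ)
    (v : (Σ j : Fin k, Fin (n j)) → F) : ℕ :=
  sInf {d : ℕ | 0 < d ∧ ∃ f : MvPolynomial (Σ j : Fin k, Fin (n j)) F,
    sigmaAct n f = f ∧ f.IsHomogeneous d ∧ eval v f ≠ 0}

set_option linter.unreachableTactic false
set_option linter.unusedTactic false

lemma aeval_mul_homog {F : Type*} [CommSemiring F] {ι : Type*} {R : Type*} [CommSemiring R]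
    [Algebra F R] {f : MvPolynomial ι F} {d : ℕ} (hf : f.IsHomogeneous d) (u : R) (w : ι → R) :
    aeval (fun i => u * w i) f = u ^ d * aeval w f := by
  conv_lhs => rw [f.as_sum]
  conv_rhs => rw [f.as_sum]
  rw [map_sum, map_sum, Finset.mul_sum]
  refine Finset.sum_congr rfl fun m hm => ?_
  rw [aeval_monomial, aeval_monomial]
  have hdeg : (Finsupp.weight 1 m : ℕ) = d := hf (mem_support_iff.mp hm)
  have hdeg' : ∑ i ∈ m.support, m i = d := by
    rw [← hdeg]; simp [Finsupp.weight_apply, Finsupp.sum]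
  rw [Finsupp.prod, Finsupp.prod]
  simp_rw [mul_pow]
  rw [Finset.prod_mul_distrib, Finset.prod_pow_eq_pow_sum, hdeg']
  ring

lemma lower_bound {F : Type*} [Field F] {p : ℕ} (hp : p.Prime) [CharP F p]
    {k : ℕ} (n : Fin k → ℕ) (c : Fin k → F) (s : ℕ)
    (hs1 : ∀ j, c j ≠ 0 → p ^ (s - 1) < n j)
    {d : ℕ} {f : MvPolynomial (Σ j : Fin k, Fin (n j)) F}
    (hd : 0 < d) (hσ : sigmaAct n f = f) (hf : f.IsHomogeneous d)
    (hev : eval (fun q : Σ j : Fin k, Fin (n j) => if (q.2 : ℕ) = n q.1 - 1 then c q.1 else 0) f ≠ 0) :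
    p ^ s ≤ d := by
  haveI : Fact p.Prime := ⟨hp⟩
  set K := p ^ (s - 1) + 1 with hK
  set I : Ideal (Polynomial F) := Ideal.span {Polynomial.X ^ K} with hI
  set π : Polynomial F →ₐ[F] (Polynomial F ⧸ I) := Ideal.Quotient.mkₐ F I with hπ
  set W : (Σ j : Fin k, Fin (n j)) → Polynomial F :=
    fun q => Polynomial.C (c q.1) * Polynomial.X ^ (n q.1 - 1 - (q.2 : ℕ)) with hW
  set w : (Σ j : Fin k, Fin (n j)) → (Polynomial F ⧸ I) := fun q => π (W q) with hw
  set u : Polynomial F ⧸ I := π (1 + Polynomial.X) with hu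
  have hmem : ∀ j : Fin k, c j ≠ 0 → (Polynomial.C (c j) * Polynomial.X ^ (n j) : Polynomial F) ∈ I := by
    intro j hj
    have hKn : K ≤ n j := hs1 j hj
    have hX : (Polynomial.X ^ (n j) : Polynomial F) = Polynomial.X ^ K * Polynomial.X ^ (n j - K) := by
      rw [← pow_add]; congr 1; omega
    rw [hX, ← mul_assoc]
    exact Ideal.mul_mem_right _ _ (Ideal.mul_mem_left _ _ (Ideal.subset_span rfl))
  have key : ∀ q : Σ j : Fin k, Fin (n j), aeval (R := F) w (sigmaAct n (X q)) = u * w q := by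
    intro ⟨j, i⟩
    have hiK : (i : ℕ) < n j := i.isLt
    rw [sigmaAct, aeval_X, map_add, aeval_X]
    have hrhs : u * w ⟨j, i⟩ = w ⟨j, i⟩ + π (Polynomial.X * W ⟨j, i⟩) := by
      rw [hu, hw, ← map_mul, ← map_add, add_mul, one_mul]
    rw [hrhs]
    congr 1
    by_cases h0 : 0 < (i : ℕ)
    · rw [dif_pos h0, aeval_X]
      show π (W ⟨j, ⟨(i : ℕ) - 1, _⟩⟩) = π (Polynomial.X * W ⟨j, i⟩)
      congr 1
      rw [hW]
      simp only []
      rw [mul_comm Polynomial.X _, mul_assoc, ← pow_succ]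
      congr 2
      omega
    · rw [dif_neg h0]
      have hi0 : (i : ℕ) = 0 := by omega
      by_cases hc : c j = 0
      · rw [hw, hW]; simp [hc]
      · symm
        rw [hw, hW]
        simp only [hi0, Nat.sub_zero]
        rw [mul_comm Polynomial.X _, mul_assoc, ← pow_succ]
        have hn1 : n j - 1 + 1 = n j := by omega
        rw [hn1]
        exact (Ideal.Quotient.eq_zero_iff_mem).mpr (hmem j hc)
  have stepA : ∀ g : MvPolynomial (Σ j : Fin k, Fin (n j)) F,
      aeval (R := F) w (sigmaAct n g) = aeval (R := F) (fun q => u * w q) g := by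
    intro g
    have : (aeval (R := F) w).comp (sigmaAct n) = aeval (R := F) (fun q => u * w q) := by
      apply algHom_ext
      intro q
      simpa using key q
    calc aeval (R := F) w (sigmaAct n g)
        = ((aeval (R := F) w).comp (sigmaAct n)) g := rfl
      _ = aeval (R := F) (fun q => u * w q) g := by rw [this]
  have h1 : aeval (R := F) w f = u ^ d * aeval (R := F) w f := by
    conv_lhs => rw [← hσ]
    rw [stepA f, aeval_mul_homog hf]
  have hπW : aeval (R := F) w f = π (aeval (R := F) W f) := (comp_aeval_apply W π f).symm
  set P : Polynomial F := aeval (R := F) W f with hP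
  have hP0 : P.coeff 0 ≠ 0 := by
    have hWv : (fun q : Σ j : Fin k, Fin (n j) => Polynomial.aeval (0 : F) (W q)) =
        (fun q : Σ j : Fin k, Fin (n j) => if (q.2 : ℕ) = n q.1 - 1 then c q.1 else 0) := by
      funext ⟨j, i⟩
      have hiK : (i : ℕ) < n j := i.isLt
      rw [hW]
      simp only [map_mul, map_pow, Polynomial.aeval_X, Polynomial.aeval_C, Algebra.algebraMap_self,
        RingHom.id_apply]
      rw [zero_pow_eq]
      by_cases h : (i : ℕ) = n j - 1
      · rw [if_pos (by omega), if_pos h, mul_one]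
      · rw [if_neg (by omega), if_neg h, mul_zero]
    have hPev : Polynomial.aeval (0 : F) P = eval
        (fun q : Σ j : Fin k, Fin (n j) => if (q.2 : ℕ) = n q.1 - 1 then c q.1 else 0) f := by
      rw [hP, comp_aeval_apply W (Polynomial.aeval (0 : F)) f, hWv, ← coe_aeval_eq_eval]
      rfl
    rw [Polynomial.coeff_zero_eq_eval_zero, ← Polynomial.coe_aeval_eq_eval, hPev]
    exact hev
  have hdvd : Polynomial.X ^ K ∣ ((1 + Polynomial.X : Polynomial F) ^ d - 1) * P := by
    rw [← Ideal.mem_span_singleton]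
    show _ ∈ I
    rw [← Ideal.Quotient.eq_zero_iff_mem]
    have hcast : (Ideal.Quotient.mk I) (((1 + Polynomial.X : Polynomial F) ^ d - 1) * P)
        = (u ^ d - 1) * π P := by
      simp only [map_mul, map_sub, map_pow, map_one]
      rfl
    rw [hcast]
    have h2 : u ^ d * π P = π P := by rw [← hπW, ← h1]
    rw [sub_mul, one_mul, h2, sub_self]
  have hXP : ¬ (Polynomial.X : Polynomial F) ∣ P := by
    rw [Polynomial.X_dvd_iff]; exact hP0
  have hQdvd : Polynomial.X ^ K ∣ ((1 + Polynomial.X : Polynomial F) ^ d - 1) :=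
    Polynomial.prime_X.pow_dvd_of_dvd_mul_right K hXP hdvd
  set a := d.factorization p with ha
  set m := d / p ^ a with hm
  have hdm : p ^ a * m = d := Nat.ordProj_mul_ordCompl_eq_self d p
  have hpm : ¬ p ∣ m := Nat.not_dvd_ordCompl hp (by omega)
  have hm0 : m ≠ 0 := by
    intro h
    rw [h, mul_zero] at hdm
    omega
  have hpow : ((1 + Polynomial.X : Polynomial F)) ^ d = (1 + Polynomial.X ^ p ^ a) ^ m := by
    rw [← hdm, pow_mul, add_pow_char_pow, one_pow]
  have hcoeff : ((1 + Polynomial.X : Polynomial F) ^ d - 1).coeff (p ^ a) = (m : F) := by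
    have hpa0 : p ^ a ≠ 0 := pow_ne_zero _ hp.pos.ne'
    rw [Polynomial.coeff_sub, hpow, add_comm (1 : Polynomial F), add_pow,
      Polynomial.finset_sum_coeff]
    have hone : (1 : Polynomial F).coeff (p ^ a) = 0 := by
      rw [Polynomial.coeff_one, if_neg (by omega)]
    rw [hone, sub_zero]
    rw [Finset.sum_eq_single 1]
    · rw [pow_one, one_pow, mul_one, ← Polynomial.C_eq_natCast, Polynomial.coeff_mul_C,
        Polynomial.coeff_X_pow, if_pos rfl, one_mul, Nat.choose_one_right]
    · intro b hb hb1
      have hpa : 0 < p ^ a := pow_pos hp.pos a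
      rw [one_pow, mul_one, ← pow_mul, ← Polynomial.C_eq_natCast, Polynomial.coeff_mul_C,
        Polynomial.coeff_X_pow, if_neg, zero_mul]
      intro h
      exact hb1 (Nat.eq_of_mul_eq_mul_left hpa (by rw [mul_one]; exact h)).symm
    · intro h1
      exact absurd (Finset.mem_range.mpr (Nat.succ_lt_succ (Nat.pos_of_ne_zero hm0))) h1
  have hKa : K ≤ p ^ a := by
    by_contra hlt
    push_neg at hlt
    have := (Polynomial.X_pow_dvd_iff.mp hQdvd) (p ^ a) hlt
    rw [hcoeff] at this
    exact hpm ((CharP.cast_eq_zero_iff F p m).mp this)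
  have hsa : s ≤ a := by
    rcases Nat.eq_zero_or_pos s with rfl | hs
    · omega
    · have : p ^ (s - 1) < p ^ a := by omega
      have := (Nat.pow_lt_pow_iff_right hp.one_lt).mp this
      omega
  calc p ^ s ≤ p ^ a := Nat.pow_le_pow_right hp.pos hsa
    _ ≤ p ^ a * m := Nat.le_mul_of_pos_right _ (Nat.pos_of_ne_zero hm0)
    _ = d := hdm

lemma upper_bound {F : Type*} [Field F] {p : ℕ} (hp : p.Prime) [CharP F p]
    {k : ℕ} (n : Fin k → ℕ) (c : Fin k → F) (s : ℕ) (j0 : Fin k)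
    (hc0 : c j0 ≠ 0) (hn0 : 0 < n j0) (hns : n j0 ≤ p ^ s) :
    ∃ f : MvPolynomial (Σ j : Fin k, Fin (n j)) F, sigmaAct n f = f ∧ f.IsHomogeneous (p ^ s) ∧
      eval (fun q : Σ j : Fin k, Fin (n j) => if (q.2 : ℕ) = n q.1 - 1 then c q.1 else 0) f ≠ 0 := by
  obtain ⟨M, hM⟩ : ∃ M, n j0 = M + 1 := ⟨n j0 - 1, by omega⟩
  set v : (Σ j : Fin k, Fin (n j)) → F :=
    fun q => if (q.2 : ℕ) = n q.1 - 1 then c q.1 else 0 with hv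
  set Z : ℕ → MvPolynomial (Σ j : Fin k, Fin (n j)) F :=
    fun a => if h : a < n j0 then X ⟨j0, ⟨a, h⟩⟩ else 0 with hZ
  have hZσ : ∀ a, a < n j0 → sigmaAct n (Z a) = Z a + if 0 < a then Z (a - 1) else 0 := by
    intro a ha
    simp only [hZ]
    simp only [dif_pos ha]
    rw [sigmaAct, aeval_X]
    congr 1
    by_cases h0 : 0 < a
    · rw [dif_pos h0, if_pos h0, dif_pos (by omega : a - 1 < n j0)]
    · rw [dif_neg h0, if_neg h0]
  have hZhom : ∀ a, (Z a).IsHomogeneous 1 := by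
    intro a
    simp only [hZ]
    by_cases h : a < n j0
    · rw [dif_pos h]; exact isHomogeneous_X _ _
    · rw [dif_neg h]; exact isHomogeneous_zero _ _ _
  have hZeval : ∀ a, a < n j0 → eval v (Z a) = if a = M then c j0 else 0 := by
    intro a ha
    simp only [hZ, hv, dif_pos ha, eval_X]
    by_cases h : a = M
    · rw [if_pos (show ((⟨a, ha⟩ : Fin (n j0)) : ℕ) = n j0 - 1 by simp; omega), if_pos h]
    · rw [if_neg (show ¬ ((⟨a, ha⟩ : Fin (n j0)) : ℕ) = n j0 - 1 by simp; omega), if_neg h]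
  set ℓ : ℕ → MvPolynomial (Σ j : Fin k, Fin (n j)) F :=
    fun t => ∑ m ∈ Finset.range (M + 1), (Nat.choose t m : F) • Z (M - m) with hℓ
  have hσℓ : ∀ t, sigmaAct n (ℓ t) = ℓ (t + 1) := by
    intro t
    simp only [hℓ]
    simp only [map_sum, map_smul]
    have hrw : ∀ m ∈ Finset.range (M + 1), (Nat.choose t m : F) • sigmaAct n (Z (M - m)) =
        (Nat.choose t m : F) • Z (M - m) +
        (Nat.choose t m : F) • (if 0 < M - m then Z (M - m - 1) else 0) := by
      intro m hm
      rw [hZσ (M - m) (by omega), smul_add]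
    rw [Finset.sum_congr rfl hrw, Finset.sum_add_distrib]
    -- second sum: peel the last term (m = M), where it vanishes
    have h2 : ∑ m ∈ Finset.range (M + 1),
        (Nat.choose t m : F) • (if 0 < M - m then Z (M - m - 1) else 0) =
        ∑ m ∈ Finset.range M, (Nat.choose t m : F) • Z (M - m - 1) := by
      rw [Finset.sum_range_succ]
      rw [if_neg (by omega), smul_zero, add_zero]
      refine Finset.sum_congr rfl fun m hm => ?_
      rw [if_pos (by simp only [Finset.mem_range] at hm; omega)]
    rw [h2]
    -- first sum: peel the first term (m = 0)
    have h1 : ∑ m ∈ Finset.range (M + 1), (Nat.choose t m : F) • Z (M - m) =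
        (∑ m ∈ Finset.range M, (Nat.choose t (m + 1) : F) • Z (M - (m + 1))) + Z M := by
      rw [Finset.sum_range_succ']
      simp [Nat.choose_zero_right]
    have h1' : ∑ m ∈ Finset.range (M + 1), (Nat.choose (t + 1) m : F) • Z (M - m) =
        (∑ m ∈ Finset.range M, (Nat.choose (t + 1) (m + 1) : F) • Z (M - (m + 1))) + Z M := by
      rw [Finset.sum_range_succ']
      simp [Nat.choose_zero_right]
    rw [h1, h1']
    have h3 : ∀ m ∈ Finset.range M, (Nat.choose (t + 1) (m + 1) : F) • Z (M - (m + 1)) =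
        (Nat.choose t (m + 1) : F) • Z (M - (m + 1)) + (Nat.choose t m : F) • Z (M - m - 1) := by
      intro m hm
      rw [Nat.choose_succ_succ, Nat.cast_add, add_smul]
      rw [add_comm ((Nat.choose t m : F) • _)]
      congr 2
      all_goals omega
    rw [Finset.sum_congr rfl h3, Finset.sum_add_distrib]
    try ring
  have hℓ0 : ℓ 0 = Z M := by
    simp only [hℓ]
    rw [Finset.sum_eq_single 0]
    · simp
    · intro m hm hm0
      rw [Nat.choose_eq_zero_of_lt (by omega), Nat.cast_zero, zero_smul]
    · intro h; exact absurd (Finset.mem_range.mpr (by omega)) h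
  have hℓps : ℓ (p ^ s) = ℓ 0 := by
    simp only [hℓ]
    refine Finset.sum_congr rfl fun m hm => ?_
    rcases Nat.eq_zero_or_pos m with rfl | hm0
    · simp
    · have hmps : m ≠ p ^ s := by
        simp only [Finset.mem_range] at hm
        omega
      have hdvd : p ∣ (p ^ s).choose m := hp.dvd_choose_pow (by omega) hmps
      have : ((p ^ s).choose m : F) = 0 := (CharP.cast_eq_zero_iff F p _).mpr hdvd
      rw [this, Nat.choose_eq_zero_of_lt (by omega), Nat.cast_zero]
  have hZM : Z M ≠ 0 := by
    simp only [hZ]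
    simp only [dif_pos (by omega : M < n j0)]
    exact X_ne_zero _
  have hℓeval : ∀ t, eval v (ℓ t) = c j0 := by
    intro t
    simp only [hℓ]
    rw [map_sum]
    rw [Finset.sum_eq_single 0]
    · rw [smul_eq_C_mul, map_mul, eval_C, Nat.sub_zero, hZeval M (by omega), if_pos rfl]
      simp
    · intro m hm hm0
      rw [smul_eq_C_mul, map_mul, eval_C, hZeval (M - m) (by omega),
        if_neg (by simp only [Finset.mem_range] at hm; omega), mul_zero]
    · intro h; exact absurd (Finset.mem_range.mpr (by omega)) h
  refine ⟨∏ t ∈ Finset.range (p ^ s), ℓ t, ?_, ?_, ?_⟩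
  · rw [map_prod]
    have hshift : ∀ t ∈ Finset.range (p ^ s), sigmaAct n (ℓ t) = ℓ (t + 1) :=
      fun t _ => hσℓ t
    rw [Finset.prod_congr rfl hshift]
    have hcan : (∏ t ∈ Finset.range (p ^ s), ℓ (t + 1)) * Z M =
        (∏ t ∈ Finset.range (p ^ s), ℓ t) * Z M := by
      calc (∏ t ∈ Finset.range (p ^ s), ℓ (t + 1)) * Z M
          = (∏ t ∈ Finset.range (p ^ s), ℓ (t + 1)) * ℓ 0 := by rw [hℓ0]
        _ = ∏ t ∈ Finset.range (p ^ s + 1), ℓ t := (Finset.prod_range_succ' ℓ (p ^ s)).symm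
        _ = (∏ t ∈ Finset.range (p ^ s), ℓ t) * ℓ (p ^ s) := Finset.prod_range_succ ℓ (p ^ s)
        _ = (∏ t ∈ Finset.range (p ^ s), ℓ t) * Z M := by rw [hℓps, hℓ0]
    exact mul_right_cancel₀ hZM hcan
  · have := IsHomogeneous.prod (Finset.range (p ^ s)) ℓ (fun _ => 1)
      (fun t _ => IsHomogeneous.sum _ _ _ (fun m _ =>
        (homogeneousSubmodule _ F 1).smul_mem _ (hZhom (M - m))))
    simpa using this
  · rw [map_prod]
    have : ∀ t ∈ Finset.range (p ^ s), eval v (ℓ t) = c j0 := fun t _ => hℓeval t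
    rw [Finset.prod_congr rfl this, Finset.prod_const, Finset.card_range]
    exact pow_ne_zero _ hc0

theorem stmt3 {F : Type*} [Field F] [IsAlgClosed F] {p : ℕ} (hp : p.Prime) [CharP F p]
    (r k : ℕ) (n : Fin k → ℕ) (hn : ∀ j, 0 < n j) (hnr : ∀ j, n j ≤ p ^ r)
    (c : Fin k → F) (hc : ∃ j, c j ≠ 0) (s : ℕ)
    (hs1 : ∀ j, c j ≠ 0 → p ^ (s - 1) < n j)
    (hs2 : ∃ j, c j ≠ 0 ∧ n j ≤ p ^ s) :
    epsCyc n (fun q => if (q.2 : ℕ) = n q.1 - 1 then c q.1 else 0) = p ^ s := by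
  obtain ⟨j0, hc0, hns⟩ := hs2
  have hmem : p ^ s ∈ {d : ℕ | 0 < d ∧ ∃ f : MvPolynomial (Σ j : Fin k, Fin (n j)) F,
      sigmaAct n f = f ∧ f.IsHomogeneous d ∧
      eval (fun q : Σ j : Fin k, Fin (n j) => if (q.2 : ℕ) = n q.1 - 1 then c q.1 else 0) f ≠ 0} :=
    ⟨pow_pos hp.pos s, upper_bound hp n c s j0 hc0 (hn j0) hns⟩
  rw [epsCyc]
  apply le_antisymm
  · exact Nat.sInf_le hmem
  · refine le_csInf ⟨_, hmem⟩ ?_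
    rintro d ⟨hd0, f, h1, h2, h3⟩
    exact lower_bound hp n c s hs1 hd0 h1 h2 h3
end

section
/- Let $F$ be an algebraically closed field of characteristic $2$, $\tilde G$ the Klein four group with generators $\sigma_1, \sigma_2$, and $\lambda \in F \setminus \{0,1\}$. Let $V_{2,\lambda}$ be the $2$-dimensional $\tilde G$-module with dual basis variables $x_1, y_1$ where $\sigma_i(x_1) = x_1$ for $i=1,2$, $\sigma_1(y_1) = y_1 + x_1$, $\sigma_2(y_1) = y_1 + \lambda x_1$. Then the invariant ring $F[V_{2,\lambda}]^{\tilde G}$ is generated by $x_1$ and the norm $N_{\tilde G}(y_1) = \prod_{\tau \in \tilde G} \tau(y_1)$, and consequently $\delta(\tilde G, V_{2,\lambda}) = \gamma(\tilde G, V_{2,\lambda}) = 4$. -/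
open MvPolynomial

/-- Action of `σ₁` on `F[V_{2,λ}] = F[x₁, y₁]` (variable `0` is `x₁`, variable `1` is `y₁`):
`σ₁(x₁) = x₁`, `σ₁(y₁) = y₁ + x₁`. -/
noncomputable def s1Act {F : Type*} [Field F] :
    MvPolynomial (Fin 2) F →ₐ[F] MvPolynomial (Fin 2) F :=
  aeval ![X 0, X 1 + X 0]

/-- Action of `σ₂`: `σ₂(x₁) = x₁`, `σ₂(y₁) = y₁ + λ x₁`. -/
noncomputable def s2Act {F : Type*} [Field F] (lam : F) :
    MvPolynomial (Fin 2) F →ₐ[F] MvPolynomial (Fin 2) F :=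
  aeval ![X 0, X 1 + C lam * X 0]

/-- The norm `N(y₁) = ∏_{τ ∈ G̃} τ(y₁) = y₁(y₁+x₁)(y₁+λx₁)(y₁+(1+λ)x₁)` (char 2). -/
noncomputable def normY {F : Type*} [Field F] (lam : F) : MvPolynomial (Fin 2) F :=
  X 1 * (X 1 + X 0) * (X 1 + C lam * X 0) * (X 1 + C (1 + lam) * X 0)

/-- Action of `σ₁` on points of `V_{2,λ}`. -/
def p1Act {F : Type*} [Field F] (v : Fin 2 → F) : Fin 2 → F := ![v 0, v 1 + v 0]

/-- Action of `σ₂` on points of `V_{2,λ}`. -/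
def p2Act {F : Type*} [Field F] (lam : F) (v : Fin 2 → F) : Fin 2 → F :=
  ![v 0, v 1 + lam * v 0]

/-- `ε(G̃,v)` for the Klein four group acting on `V_{2,λ}`. -/
noncomputable def epsV2 {F : Type*} [Field F] (lam : F) (v : Fin 2 → F) : ℕ :=
  sInf {d : ℕ | 0 < d ∧ ∃ f : MvPolynomial (Fin 2) F,
    s1Act f = f ∧ s2Act lam f = f ∧ f.IsHomogeneous d ∧ eval v f ≠ 0}

/-- `δ(G̃, V_{2,λ})`. -/
noncomputable def deltaV2 {F : Type*} [Field F] (lam : F) : ℕ :=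
  sSup {e : ℕ | ∃ v : Fin 2 → F, v ≠ 0 ∧ p1Act v = v ∧ p2Act lam v = v ∧ e = epsV2 lam v}

/-- `γ(G̃, V_{2,λ})`. -/
noncomputable def gammaV2 {F : Type*} [Field F] (lam : F) : ℕ :=
  sSup {e : ℕ | ∃ v : Fin 2 → F, v ≠ 0 ∧ e = epsV2 lam v}

/-! Writing `F[x₁, y₁] = F[x₁][y₁]`, the generators act as the translations `y₁ ↦ y₁ + x₁` and
`y₁ ↦ y₁ + λx₁` over the domain `F[x₁]`; in characteristic `2` these generate the group of four
translations by `S = {0, x₁, λx₁, (1+λ)x₁}`, whose norm `N = ∏_{s ∈ S} (y₁ + s)` is monic of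
degree `4`. An invariant of degree `< |S|` in `y₁` takes the same value at the `|S|` points of `S`,
hence is constant in `y₁`; dividing an invariant by `N` and inducting on the degree then shows
that it is a polynomial in `N` with coefficients in `F[x₁]`.
The same degree bound shows that an invariant of total degree `< 4` is a polynomial in `x₁` alone,
so it vanishes at the fixed points `(0, t)`, where `N` takes the value `t⁴`; thus `ε = 4` there,
while `ε(v) = 1` whenever `x₁(v) ≠ 0`. -/
namespace Polynomial

variable {R : Type*} [CommRing R]

theorem div_modByMonic_taylor {N : R[X]} (hN : N.Monic) (r : R) (p : R[X]) :
    taylor r p /ₘ taylor r N = taylor r (p /ₘ N) ∧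
      taylor r p %ₘ taylor r N = taylor r (p %ₘ N) := by
  nontriviality R
  refine div_modByMonic_unique _ _ (by rw [Monic, leadingCoeff_taylor]; exact hN) ⟨?_, ?_⟩
  · rw [← taylor_mul, ← map_add, modByMonic_add_div]
  · rw [degree_taylor, degree_taylor]
    exact degree_modByMonic_lt p hN

section Domain

variable [IsDomain R]

theorem eq_C_eval_zero_of_taylor_eq {S : Finset R} {p : R[X]} (hp : ∀ s ∈ S, taylor s p = p)
    (hdeg : p.natDegree < S.card) : p = C (p.eval 0) := by
  refine eq_of_natDegree_lt_card_of_eval_eq' _ _ S (fun s hs => ?_) (by simpa using hdeg)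
  rw [eval_C, ← zero_add s, ← taylor_eval, hp s hs]

theorem exists_eq_comp_of_taylor_eq {S : Finset R} {N p : R[X]} (hN : N.Monic)
    (hNpos : 0 < N.natDegree) (hNS : N.natDegree ≤ S.card) (hNinv : ∀ s ∈ S, taylor s N = N)
    (hp : ∀ s ∈ S, taylor s p = p) : ∃ q : R[X], p = q.comp N := by
  induction hn : p.natDegree using Nat.strong_induction_on generalizing p with
  | _ n ih =>
    by_cases hlt : n < S.card
    · exact ⟨C (p.eval 0), by rw [C_comp]; exact eq_C_eval_zero_of_taylor_eq hp (hn ▸ hlt)⟩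
    have hinv (s : R) (hs : s ∈ S) :
        taylor s (p /ₘ N) = p /ₘ N ∧ taylor s (p %ₘ N) = p %ₘ N := by
      obtain ⟨hq, hr⟩ := div_modByMonic_taylor hN s p
      rw [hp s hs, hNinv s hs] at hq hr
      exact ⟨hq.symm, hr.symm⟩
    have hr : p %ₘ N = C ((p %ₘ N).eval 0) := by
      refine eq_C_eval_zero_of_taylor_eq (fun s hs => (hinv s hs).2) ?_
      exact (natDegree_modByMonic_lt p hN (by rintro rfl; simp at hNpos)).trans_le hNS
    obtain ⟨q, hq⟩ :=
      ih _ (by rw [natDegree_divByMonic p hN]; omega) (fun s hs => (hinv s hs).1) rfl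
    refine ⟨C ((p %ₘ N).eval 0) + X * q, ?_⟩
    rw [add_comp, mul_comp, X_comp, C_comp, ← hq, ← hr, modByMonic_add_div]

end Domain

noncomputable def kleinNorm (a b : R) : R[X] := X * (X + C a) * (X + C b) * (X + C (a + b))

theorem kleinNorm_comm (a b : R) : kleinNorm a b = kleinNorm b a := by
  unfold kleinNorm; rw [add_comm b a]; ring

theorem monic_kleinNorm (a b : R) : (kleinNorm a b).Monic := by
  unfold kleinNorm
  exact (((monic_X.mul (monic_X_add_C _)).mul (monic_X_add_C _)).mul (monic_X_add_C _))

theorem natDegree_kleinNorm [Nontrivial R] (a b : R) : (kleinNorm a b).natDegree = 4 := by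
  unfold kleinNorm
  compute_degree!

theorem taylor_kleinNorm_left [CharP R 2] (a b : R) :
    taylor a (kleinNorm a b) = kleinNorm a b := by
  simp only [kleinNorm, taylor_apply, mul_comp, add_comp, X_comp, C_comp, C_add,
    CharTwo.add_cancel_right, ← add_assoc]
  ring

theorem taylor_kleinNorm_right [CharP R 2] (a b : R) :
    taylor b (kleinNorm a b) = kleinNorm a b := by
  rw [kleinNorm_comm, taylor_kleinNorm_left]

theorem taylor_eq_of_mem_klein [DecidableEq R] {a b : R} {p : R[X]} (ha : taylor a p = p)
    (hb : taylor b p = p) : ∀ s ∈ ({0, a, b, a + b} : Finset R), taylor s p = p := by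
  simp only [Finset.mem_insert, Finset.mem_singleton, forall_eq_or_imp, forall_eq, taylor_zero,
    ← taylor_taylor, ha, hb, and_self]

theorem card_klein [DecidableEq R] [CharP R 2] {a b : R} (ha : a ≠ 0) (hb : b ≠ 0)
    (hab : a ≠ b) :
    ({0, a, b, a + b} : Finset R).card = 4 := by
  have hab' : a + b ≠ 0 := by rwa [Ne, CharTwo.add_eq_zero]
  have h1 : a + b ≠ a := by simpa using hb
  have h2 : a + b ≠ b := by simpa using ha
  simp [Finset.card_insert_of_notMem, ha.symm, hb.symm, hab'.symm, hab, h1.symm, h2.symm]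

theorem exists_eq_comp_kleinNorm_of_taylor_eq [IsDomain R] [CharP R 2] {a b : R} (ha : a ≠ 0)
    (hb : b ≠ 0) (hab : a ≠ b) {p : R[X]} (hpa : taylor a p = p) (hpb : taylor b p = p) :
    ∃ q : R[X], p = q.comp (kleinNorm a b) := by
  classical
  have hN := natDegree_kleinNorm a b
  exact exists_eq_comp_of_taylor_eq (monic_kleinNorm a b) (by omega)
    (by rw [hN, card_klein ha hb hab])
    (taylor_eq_of_mem_klein (taylor_kleinNorm_left a b) (taylor_kleinNorm_right a b))
    (taylor_eq_of_mem_klein hpa hpb)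

theorem eq_C_eval_zero_of_taylor_eq_of_natDegree_lt_four [IsDomain R] [CharP R 2] {a b : R}
    (ha : a ≠ 0) (hb : b ≠ 0) (hab : a ≠ b) {p : R[X]} (hpa : taylor a p = p)
    (hpb : taylor b p = p) (hdeg : p.natDegree < 4) : p = C (p.eval 0) := by
  classical
  exact eq_C_eval_zero_of_taylor_eq (taylor_eq_of_mem_klein hpa hpb) (by rwa [card_klein ha hb hab])

end Polynomial

namespace KleinFourV2

open Polynomial (taylor taylorAlgHom kleinNorm)

variable {F : Type*} [Field F]

noncomputable def yPolyEquiv :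
    MvPolynomial (Fin 2) F ≃ₐ[F] Polynomial (MvPolynomial (Fin 1) F) :=
  (renameEquiv F (Equiv.swap 0 1)).trans (finSuccEquiv F 1)

@[simp] theorem yPolyEquiv_C (c : F) :
    yPolyEquiv (C c : MvPolynomial (Fin 2) F) = Polynomial.C (C c) :=
  yPolyEquiv.commutes c

@[simp] theorem yPolyEquiv_X_zero :
    yPolyEquiv (X 0 : MvPolynomial (Fin 2) F) = Polynomial.C (X 0) := by
  rw [yPolyEquiv, AlgEquiv.trans_apply, renameEquiv_apply, rename_X, Equiv.swap_apply_left]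
  exact finSuccEquiv_X_succ (j := 0)

@[simp] theorem yPolyEquiv_X_one : yPolyEquiv (X 1 : MvPolynomial (Fin 2) F) = Polynomial.X := by
  rw [yPolyEquiv, AlgEquiv.trans_apply, renameEquiv_apply, rename_X, Equiv.swap_apply_right]
  exact finSuccEquiv_X_zero

theorem yPolyEquiv_s1Act (f : MvPolynomial (Fin 2) F) :
    yPolyEquiv (s1Act f) = taylor (X 0) (yPolyEquiv f) := by
  have : yPolyEquiv.toAlgHom.comp s1Act =
      ((taylorAlgHom (X 0 : MvPolynomial (Fin 1) F)).restrictScalars F).comp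
        yPolyEquiv.toAlgHom := by
    ext i : 1
    fin_cases i <;> simp [s1Act, Polynomial.taylor_X]
  exact DFunLike.congr_fun this f

theorem yPolyEquiv_s2Act (lam : F) (f : MvPolynomial (Fin 2) F) :
    yPolyEquiv (s2Act lam f) = taylor (C lam * X 0) (yPolyEquiv f) := by
  have : yPolyEquiv.toAlgHom.comp (s2Act lam) =
      ((taylorAlgHom (C lam * X 0 : MvPolynomial (Fin 1) F)).restrictScalars F).comp
        yPolyEquiv.toAlgHom := by
    ext i : 1
    fin_cases i <;> simp [s2Act, Polynomial.taylor_X]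
  exact DFunLike.congr_fun this f

theorem yPolyEquiv_normY (lam : F) : yPolyEquiv (normY lam) = kleinNorm (X 0) (C lam * X 0) := by
  simp only [normY, kleinNorm, map_mul, map_add, map_one, yPolyEquiv_X_zero, yPolyEquiv_X_one,
    yPolyEquiv_C]
  ring

theorem s1Act_eq_self_iff (f : MvPolynomial (Fin 2) F) :
    s1Act f = f ↔ taylor (X 0) (yPolyEquiv f) = yPolyEquiv f := by
  rw [← yPolyEquiv_s1Act, yPolyEquiv.injective.eq_iff]

theorem s2Act_eq_self_iff (lam : F) (f : MvPolynomial (Fin 2) F) :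
    s2Act lam f = f ↔ taylor (C lam * X 0) (yPolyEquiv f) = yPolyEquiv f := by
  rw [← yPolyEquiv_s2Act, yPolyEquiv.injective.eq_iff]

theorem s1Act_normY [CharP F 2] (lam : F) : s1Act (normY lam) = normY lam := by
  rw [s1Act_eq_self_iff, yPolyEquiv_normY, Polynomial.taylor_kleinNorm_left]

theorem s2Act_normY [CharP F 2] (lam : F) : s2Act lam (normY lam) = normY lam := by
  rw [s2Act_eq_self_iff, yPolyEquiv_normY, Polynomial.taylor_kleinNorm_right]

theorem s1Act_X_zero : s1Act (X 0 : MvPolynomial (Fin 2) F) = X 0 := by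
  simp [s1Act]

theorem s2Act_X_zero (lam : F) : s2Act lam (X 0 : MvPolynomial (Fin 2) F) = X 0 := by
  simp [s2Act]

theorem klein_generators_ne {lam : F} (h0 : lam ≠ 0) (h1 : lam ≠ 1) :
    (X 0 : MvPolynomial (Fin 1) F) ≠ 0 ∧ (C lam * X 0 : MvPolynomial (Fin 1) F) ≠ 0 ∧
      (X 0 : MvPolynomial (Fin 1) F) ≠ C lam * X 0 := by
  refine ⟨X_ne_zero 0, mul_ne_zero (by simpa using h0) (X_ne_zero 0), fun h => h1 ?_⟩
  have : C 1 * X 0 = C lam * (X 0 : MvPolynomial (Fin 1) F) := by rw [C_1, one_mul]; exact h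
  exact (C_injective _ _ (mul_right_cancel₀ (X_ne_zero 0) this)).symm

theorem yPolyEquiv_symm_C_mem_adjoin (r : MvPolynomial (Fin 1) F) :
    yPolyEquiv.symm (Polynomial.C r) ∈ Algebra.adjoin F {(X 0 : MvPolynomial (Fin 2) F)} := by
  induction r using MvPolynomial.induction_on with
  | C c =>
    rw [← yPolyEquiv_C, AlgEquiv.symm_apply_apply]
    exact Subalgebra.algebraMap_mem _ c
  | add p q hp hq =>
    rw [Polynomial.C_add, map_add]
    exact add_mem hp hq
  | mul_X p i hp =>
    rw [Subsingleton.elim i 0, Polynomial.C_mul, map_mul, ← yPolyEquiv_X_zero,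
      AlgEquiv.symm_apply_apply]
    exact mul_mem hp (Algebra.subset_adjoin rfl)

theorem yPolyEquiv_symm_comp_mem_adjoin (lam : F) (q : Polynomial (MvPolynomial (Fin 1) F)) :
    yPolyEquiv.symm (q.comp (kleinNorm (X 0) (C lam * X 0))) ∈
      Algebra.adjoin F {X 0, normY lam} := by
  induction q using Polynomial.induction_on' with
  | add p q hp hq =>
    rw [Polynomial.add_comp, map_add]
    exact add_mem hp hq
  | monomial n r =>
    rw [← Polynomial.C_mul_X_pow_eq_monomial, Polynomial.mul_comp, Polynomial.C_comp,
      Polynomial.X_pow_comp, map_mul, map_pow, ← yPolyEquiv_normY, AlgEquiv.symm_apply_apply]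
    refine mul_mem ?_ (pow_mem (Algebra.subset_adjoin (by simp)) n)
    exact Algebra.adjoin_mono (by simp) (yPolyEquiv_symm_C_mem_adjoin r)

theorem isInvariant_iff_mem_adjoin [CharP F 2] {lam : F} (h0 : lam ≠ 0) (h1 : lam ≠ 1)
    (f : MvPolynomial (Fin 2) F) :
    (s1Act f = f ∧ s2Act lam f = f) ↔ f ∈ Algebra.adjoin F {X 0, normY lam} := by
  constructor
  · rintro ⟨hf1, hf2⟩
    obtain ⟨ha, hb, hab⟩ := klein_generators_ne h0 h1
    obtain ⟨q, hq⟩ := Polynomial.exists_eq_comp_kleinNorm_of_taylor_eq ha hb hab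
      ((s1Act_eq_self_iff f).1 hf1) ((s2Act_eq_self_iff lam f).1 hf2)
    rw [← yPolyEquiv.symm_apply_apply f, hq]
    exact yPolyEquiv_symm_comp_mem_adjoin lam q
  · intro hf
    have hle : Algebra.adjoin F {X 0, normY lam} ≤
        AlgHom.equalizer s1Act (AlgHom.id F _) ⊓
          AlgHom.equalizer (s2Act lam) (AlgHom.id F _) := by
      refine Algebra.adjoin_le ?_
      rintro g (rfl | rfl)
      · exact ⟨s1Act_X_zero, s2Act_X_zero lam⟩
      · exact ⟨s1Act_normY lam, s2Act_normY lam⟩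
    exact hle hf

theorem eval_zero_left_eq_eval_map (f : MvPolynomial (Fin 2) F) (t : F) :
    eval ![0, t] f = ((yPolyEquiv f).map constantCoeff).eval t := by
  have : eval ![0, t] = (Polynomial.evalRingHom t).comp
      ((Polynomial.mapRingHom constantCoeff).comp (yPolyEquiv : _ ≃ₐ[F] _).toRingHom) := by
    ext i
    · simp
    · fin_cases i <;> simp
  exact RingHom.congr_fun this f

theorem natDegree_yPolyEquiv_le (f : MvPolynomial (Fin 2) F) :
    (yPolyEquiv f).natDegree ≤ f.totalDegree := by
  rw [yPolyEquiv, AlgEquiv.trans_apply, natDegree_finSuccEquiv]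
  exact (degreeOf_le_totalDegree _ _).trans (totalDegree_rename_le _ _)

theorem eval_zero_left_eq_zero [CharP F 2] {lam : F} (h0 : lam ≠ 0) (h1 : lam ≠ 1)
    {f : MvPolynomial (Fin 2) F} (hf1 : s1Act f = f) (hf2 : s2Act lam f = f) {d : ℕ}
    (hf : f.IsHomogeneous d) (hd0 : 0 < d) (hd4 : d < 4) (t : F) : eval ![0, t] f = 0 := by
  obtain ⟨ha, hb, hab⟩ := klein_generators_ne h0 h1
  have hconst := Polynomial.eq_C_eval_zero_of_taylor_eq_of_natDegree_lt_four ha hb hab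
    ((s1Act_eq_self_iff f).1 hf1) ((s2Act_eq_self_iff lam f).1 hf2)
    ((natDegree_yPolyEquiv_le f).trans_lt (hf.totalDegree_le.trans_lt hd4))
  have heval (s : F) : eval ![0, s] f = constantCoeff ((yPolyEquiv f).eval 0) := by
    rw [eval_zero_left_eq_eval_map, hconst, Polynomial.map_C, Polynomial.eval_C, Polynomial.eval_C]
  calc eval ![0, t] f = eval 0 f := by
        rw [heval, ← heval 0]
        congr
        ext i; fin_cases i <;> rfl
    _ = 0 := by
        rw [eval_zero, constantCoeff_eq]
        exact hf.coeff_eq_zero (by simpa using hd0.ne)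

theorem isHomogeneous_normY (lam : F) : (normY lam).IsHomogeneous 4 := by
  have hX1 : (X 1 : MvPolynomial (Fin 2) F).IsHomogeneous 1 := isHomogeneous_X F 1
  exact ((hX1.mul (hX1.add (isHomogeneous_X F 0))).mul
    (hX1.add (isHomogeneous_C_mul_X lam 0))).mul (hX1.add (isHomogeneous_C_mul_X (1 + lam) 0))

theorem eval_zero_left_normY (lam t : F) : eval ![0, t] (normY lam) = t ^ 4 := by
  simp [normY]
  ring

theorem epsV2_zero_left [CharP F 2] {lam : F} (h0 : lam ≠ 0) (h1 : lam ≠ 1) {t : F}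
    (ht : t ≠ 0) :
    epsV2 lam ![0, t] = 4 := by
  refine IsLeast.csInf_eq ⟨⟨by norm_num, normY lam, s1Act_normY lam, s2Act_normY lam,
    isHomogeneous_normY lam, by simpa [eval_zero_left_normY] using ht⟩, ?_⟩
  rintro d ⟨hd0, f, hf1, hf2, hf, hne⟩
  by_contra! hd4
  exact hne (eval_zero_left_eq_zero h0 h1 hf1 hf2 hf hd0 hd4 t)

theorem epsV2_le_four [CharP F 2] {lam : F} (h0 : lam ≠ 0) (h1 : lam ≠ 1) {v : Fin 2 → F}
    (hv : v ≠ 0) : epsV2 lam v ≤ 4 := by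
  by_cases hv0 : v 0 = 0
  · have hv_eq : v = ![0, v 1] := by ext i; fin_cases i <;> simp [hv0]
    have hv1 : v 1 ≠ 0 := fun hv1 => hv (by rw [hv_eq, hv1]; ext i; fin_cases i <;> rfl)
    rw [hv_eq, epsV2_zero_left h0 h1 hv1]
  · have hle : epsV2 lam v ≤ 1 := Nat.sInf_le
      ⟨one_pos, X 0, s1Act_X_zero, s2Act_X_zero lam, isHomogeneous_X F 0, by simpa using hv0⟩
    omega

end KleinFourV2

theorem stmt10_general {F : Type*} [Field F] [CharP F 2]
    (lam : F) (h0 : lam ≠ 0) (h1 : lam ≠ 1) :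
    (∀ f : MvPolynomial (Fin 2) F,
      (s1Act f = f ∧ s2Act lam f = f) ↔ f ∈ Algebra.adjoin F {X 0, normY lam}) ∧
    deltaV2 (F := F) lam = 4 ∧ gammaV2 (F := F) lam = 4 := by
  open KleinFourV2 in
  have hv : ![(0 : F), 1] ≠ 0 := fun h => one_ne_zero (congrFun h 1)
  have heps : epsV2 lam ![0, 1] = 4 := epsV2_zero_left h0 h1 one_ne_zero
  refine ⟨isInvariant_iff_mem_adjoin h0 h1, ?_, ?_⟩
  · refine IsGreatest.csSup_eq ⟨⟨![0, 1], hv, ?_, ?_, heps.symm⟩, ?_⟩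
    · ext i; fin_cases i <;> simp [p1Act]
    · ext i; fin_cases i <;> simp [p2Act]
    · rintro _ ⟨v, hv, -, -, rfl⟩
      exact epsV2_le_four h0 h1 hv
  · refine IsGreatest.csSup_eq ⟨⟨![0, 1], hv, heps.symm⟩, ?_⟩
    rintro _ ⟨v, hv, rfl⟩
    exact epsV2_le_four h0 h1 hv

theorem stmt10 {F : Type*} [Field F] [IsAlgClosed F] [CharP F 2]
    (lam : F) (h0 : lam ≠ 0) (h1 : lam ≠ 1) :
    (∀ f : MvPolynomial (Fin 2) F,
      (s1Act f = f ∧ s2Act lam f = f) ↔ f ∈ Algebra.adjoin F {X 0, normY lam}) ∧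
    deltaV2 (F := F) lam = 4 ∧ gammaV2 (F := F) lam = 4 :=
  stmt10_general lam h0 h1
end

section
/- Let $F$ be an algebraically closed field of characteristic $2$ and $\tilde G$ the Klein four group. For $m \ge 2$ and any $\lambda \in F$, the type (ii) indecomposable module $V_{2m,\lambda}$ satisfies $\delta(\tilde G, V_{2m,\lambda}) = \gamma(\tilde G, V_{2m,\lambda}) = 4$. -/
open MvPolynomial

/-- Action of `σ₁` on `F[V_{2m,λ}]` with variables `inl j = x_{j+1}`, `inr j = y_{j+1}`:
`σ₁(x_j) = x_j`, `σ₁(y_j) = y_j + x_j`. -/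
noncomputable def s1Act2m {F : Type*} [Field F] (m : ℕ) :
    MvPolynomial (Fin m ⊕ Fin m) F →ₐ[F] MvPolynomial (Fin m ⊕ Fin m) F :=
  aeval (Sum.elim (fun j => X (Sum.inl j)) (fun j => X (Sum.inr j) + X (Sum.inl j)))

/-- Action of `σ₂`: `σ₂(x_j) = x_j`, `σ₂(y₁) = y₁ + λx₁`, `σ₂(y_j) = y_j + λx_j + x_{j-1}`. -/
noncomputable def s2Act2m {F : Type*} [Field F] (m : ℕ) (lam : F) :
    MvPolynomial (Fin m ⊕ Fin m) F →ₐ[F] MvPolynomial (Fin m ⊕ Fin m) F :=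
  aeval (Sum.elim (fun j => X (Sum.inl j))
    (fun j => X (Sum.inr j) + C lam * X (Sum.inl j) +
      if _ : 0 < (j : ℕ) then
        X (Sum.inl ⟨(j : ℕ) - 1, lt_of_le_of_lt (Nat.sub_le _ _) j.isLt⟩) else 0))

/-- Action of `σ₁` on points of `V_{2m,λ}`. -/
def pt1Act2m {F : Type*} [Field F] (m : ℕ) (v : Fin m ⊕ Fin m → F) : Fin m ⊕ Fin m → F :=
  Sum.elim (fun j => v (Sum.inl j)) (fun j => v (Sum.inr j) + v (Sum.inl j))

/-- Action of `σ₂` on points of `V_{2m,λ}`. -/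
def pt2Act2m {F : Type*} [Field F] (m : ℕ) (lam : F) (v : Fin m ⊕ Fin m → F) :
    Fin m ⊕ Fin m → F :=
  Sum.elim (fun j => v (Sum.inl j))
    (fun j => v (Sum.inr j) + lam * v (Sum.inl j) +
      if _ : 0 < (j : ℕ) then
        v (Sum.inl ⟨(j : ℕ) - 1, lt_of_le_of_lt (Nat.sub_le _ _) j.isLt⟩) else 0)

/-- `ε(G̃,v)` for the Klein four group acting on `V_{2m,λ}`. -/
noncomputable def eps2m {F : Type*} [Field F] (m : ℕ) (lam : F) (v : Fin m ⊕ Fin m → F) : ℕ :=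
  sInf {d : ℕ | 0 < d ∧ ∃ f : MvPolynomial (Fin m ⊕ Fin m) F,
    s1Act2m m f = f ∧ s2Act2m m lam f = f ∧ f.IsHomogeneous d ∧ eval v f ≠ 0}

/-- `δ(G̃, V_{2m,λ})`. -/
noncomputable def delta2m {F : Type*} [Field F] (m : ℕ) (lam : F) : ℕ :=
  sSup {e : ℕ | ∃ v : Fin m ⊕ Fin m → F,
    v ≠ 0 ∧ pt1Act2m m v = v ∧ pt2Act2m m lam v = v ∧ e = eps2m m lam v}

/-- `γ(G̃, V_{2m,λ})`. -/
noncomputable def gamma2m {F : Type*} [Field F] (m : ℕ) (lam : F) : ℕ :=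
  sSup {e : ℕ | ∃ v : Fin m ⊕ Fin m → F, v ≠ 0 ∧ e = eps2m m lam v}

/-!
Upper bound: a point with some `x_j ≠ 0` is separated from zero by the linear invariant `x_j`;
otherwise it is fixed by the group and has some `y_j ≠ 0`, and the orbit product of `y_j`, of
degree 4, takes the value `y_j ^ 4` there.

Lower bound, at the fixed point `e` with `y_m = 1` and all other coordinates `0`. If `f` is an
invariant of odd degree `d`, differentiating `σ₁ f = f` in `x_m` and evaluating at `e` gives
`∂f/∂y_m (e) = 0`, which by Euler's identity is `d • f e = f e`. An invariant of degree 2 is a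
quadratic form, and the invariance of its polar form on the unit vectors of the coordinates
`x_{m-1}, x_m, y_{m-1}, y_m` forces it to vanish at `e`.
-/

namespace MvPolynomial

variable {σ τ R : Type*}

theorem pderiv_aeval [CommSemiring R] [Fintype σ] (φ : σ → MvPolynomial τ R) (i : τ)
    (f : MvPolynomial σ R) :
    pderiv i (aeval φ f) = ∑ j, aeval φ (pderiv j f) * pderiv i (φ j) := by
  classical
  induction f using MvPolynomial.induction_on with
  | C a => simp
  | add p q hp hq => simp only [map_add, hp, hq, add_mul, Finset.sum_add_distrib]
  | mul_X p k hp =>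
    simp only [map_mul, aeval_X, pderiv_mul, hp, pderiv_X, map_add, add_mul,
      Finset.sum_add_distrib, Finset.sum_mul]
    congr 1
    · exact Finset.sum_congr rfl fun j _ => by ring
    · simp [Pi.single_apply]

theorem IsHomogeneous.eval_single_pderiv [CommSemiring R] [Fintype σ] [DecidableEq σ]
    {f : MvPolynomial σ R} {n : ℕ} (hf : f.IsHomogeneous n) (i : σ) :
    eval (Pi.single i 1) (pderiv i f) = n * eval (Pi.single i 1) f := by
  have h := congrArg (eval (Pi.single i (1 : R))) hf.sum_X_mul_pderiv
  simp only [map_sum, map_mul, eval_X, nsmul_eq_mul, map_natCast] at h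
  rw [← h, Finset.sum_eq_single i (fun j _ hj => by simp [hj]) (by simp)]
  simp

open scoped Pointwise in
theorem IsHomogeneous.exists_quadraticMap_eval [CommRing R] {f : MvPolynomial σ R}
    (hf : f.IsHomogeneous 2) :
    ∃ Q : QuadraticMap R (σ → R) R, ∀ v, Q v = eval v f := by
  have hmem : f ∈ Submodule.span R
      (Set.range (X : σ → MvPolynomial σ R) * Set.range (X : σ → MvPolynomial σ R)) := by
    rw [← Submodule.span_mul_span, ← homogeneousSubmodule_one_eq_span_X, ← sq,
      homogeneousSubmodule_one_pow]
    exact hf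
  clear hf
  induction hmem using Submodule.span_induction with
  | mem g hg =>
    obtain ⟨_, ⟨i, rfl⟩, _, ⟨j, rfl⟩, rfl⟩ := hg
    exact ⟨QuadraticMap.linMulLin (LinearMap.proj i) (LinearMap.proj j), fun v => by simp⟩
  | zero => exact ⟨0, fun v => by simp⟩
  | add g h _ _ hg hh =>
    obtain ⟨Q, hQ⟩ := hg
    obtain ⟨Q', hQ'⟩ := hh
    exact ⟨Q + Q', fun v => by simp [hQ, hQ']⟩
  | smul c g _ hg =>
    obtain ⟨Q, hQ⟩ := hg
    exact ⟨c • Q, fun v => by simp [hQ]⟩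

theorem IsHomogeneous.aeval_of_degree_one [CommSemiring R] {f : MvPolynomial σ R} {n : ℕ}
    (hf : f.IsHomogeneous n) (φ : σ → MvPolynomial τ R) (hφ : ∀ i, (φ i).IsHomogeneous 1) :
    (MvPolynomial.aeval φ f).IsHomogeneous n := by
  simpa using hf.aeval φ hφ

theorem eval_aeval [CommSemiring R] (φ : σ → MvPolynomial τ R) (v : τ → R)
    (f : MvPolynomial σ R) : eval v (aeval φ f) = eval (fun i => eval v (φ i)) f :=
  aeval_bind₁ v φ f

end MvPolynomial

namespace QuadraticMap

variable {R M : Type*} [CommRing R] [AddCommGroup M] [Module R M]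

theorem polar_map_of_invariant (Q : QuadraticMap R M R) {T : M → M}
    (hT : ∀ x y, T (x + y) = T x + T y) (hQ : ∀ x, Q (T x) = Q x) (x y : M) :
    polar Q (T x) (T y) = polar Q x y := by
  simp only [polar, ← hT, hQ]

/-- Comparing the polar form at `(s, w)` and `(u, s)` before and after `T₁`, `T₂` gives
`polar Q s t = 0` (using `polar Q t t = 2 • Q t = 0`); then `Q (T₁ s) = Q s` reads `Q t = 0`. -/
theorem apply_eq_zero_of_invariant [CharP R 2] (Q : QuadraticMap R M R) {T₁ T₂ : M → M}
    (hT₁ : ∀ x y, T₁ (x + y) = T₁ x + T₁ y) (hT₂ : ∀ x y, T₂ (x + y) = T₂ x + T₂ y)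
    (hQ₁ : ∀ x, Q (T₁ x) = Q x) (hQ₂ : ∀ x, Q (T₂ x) = Q x) (lam : R) {u s w t : M}
    (hw : T₁ w = w) (hs₁ : T₁ s = s + t) (hu₁ : T₁ u = u + w) (hs₂ : T₂ s = s + lam • t)
    (hu₂ : T₂ u = u + lam • w + t) : Q t = 0 := by
  have hst := hQ₁ s
  have hsw := Q.polar_map_of_invariant hT₁ hQ₁ s w
  have hus₁ := Q.polar_map_of_invariant hT₁ hQ₁ u s
  have hus₂ := Q.polar_map_of_invariant hT₂ hQ₂ u s
  rw [hs₁] at hst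
  rw [hs₁, hw] at hsw
  rw [hu₁, hs₁] at hus₁
  rw [hu₂, hs₂] at hus₂
  have htt : polar Q t t = 0 := by
    rw [polar_self, nsmul_eq_mul, Nat.cast_ofNat, CharTwo.two_eq_zero, zero_mul]
  simp only [polar_add_left, polar_add_right, polar_smul_left, polar_smul_right, smul_eq_mul,
    htt] at hsw hus₁ hus₂
  rw [polar_comm Q w t] at hus₁ hus₂
  have hQst : Q (s + t) = Q s + Q t + polar Q s t := by
    simp only [polar]; ring
  linear_combination hst - hQst + hus₂ - lam * hus₁ - (lam ^ 2 - lam) * hsw + polar_comm Q t s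
    - polar Q t s * CharTwo.two_eq_zero (R := R)

end QuadraticMap

section KleinFour

variable {F : Type*} [Field F] {m : ℕ} {lam : F}

theorem eval_s1Act2m (v : Fin m ⊕ Fin m → F) (f : MvPolynomial (Fin m ⊕ Fin m) F) :
    eval v (s1Act2m m f) = eval (pt1Act2m m v) f := by
  rw [s1Act2m, eval_aeval]
  congr 2
  funext i
  rcases i with j | j <;> simp [pt1Act2m]

theorem eval_s2Act2m (v : Fin m ⊕ Fin m → F) (f : MvPolynomial (Fin m ⊕ Fin m) F) :
    eval v (s2Act2m m lam f) = eval (pt2Act2m m lam v) f := by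
  rw [s2Act2m, eval_aeval]
  congr 2
  funext i
  rcases i with j | j
  · simp [pt2Act2m]
  · by_cases hj : 0 < (j : ℕ) <;> simp [pt2Act2m, hj]

theorem pt1Act2m_add (v w : Fin m ⊕ Fin m → F) :
    pt1Act2m m (v + w) = pt1Act2m m v + pt1Act2m m w := by
  funext i
  rcases i with j | j <;> simp [pt1Act2m]; ring

theorem pt2Act2m_add (v w : Fin m ⊕ Fin m → F) :
    pt2Act2m m lam (v + w) = pt2Act2m m lam v + pt2Act2m m lam w := by
  funext i
  rcases i with j | j
  · simp [pt2Act2m]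
  · by_cases hj : 0 < (j : ℕ) <;> simp [pt2Act2m, hj] <;> ring

theorem pt1Act2m_eq_self {v : Fin m ⊕ Fin m → F} (hv : ∀ j, v (Sum.inl j) = 0) :
    pt1Act2m m v = v := by
  funext i
  rcases i with j | j <;> simp [pt1Act2m, hv]

theorem pt2Act2m_eq_self {v : Fin m ⊕ Fin m → F} (hv : ∀ j, v (Sum.inl j) = 0) :
    pt2Act2m m lam v = v := by
  funext i
  rcases i with j | j <;> simp [pt2Act2m, hv]

theorem pt1Act2m_single_inl (j : Fin m) :
    pt1Act2m m (Pi.single (Sum.inl j) (1 : F)) =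
      Pi.single (Sum.inl j) 1 + Pi.single (Sum.inr j) 1 := by
  funext i
  rcases i with k | k <;> simp [pt1Act2m, Pi.single_apply]

theorem pt2Act2m_single_inl_of_succ (i j : Fin m) (hij : (i : ℕ) + 1 = j) :
    pt2Act2m m lam (Pi.single (Sum.inl i) 1) =
      Pi.single (Sum.inl i) 1 + lam • Pi.single (Sum.inr i) 1 + Pi.single (Sum.inr j) 1 := by
  funext k
  rcases k with k | k
  · simp [pt2Act2m, Pi.single_apply]
  · by_cases hk : 0 < (k : ℕ)
    · simp [pt2Act2m, Pi.single_apply, hk, Fin.ext_iff]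
      split_ifs <;> first | rfl | (exfalso; omega)
    · simp [pt2Act2m, Pi.single_apply, hk, Fin.ext_iff]
      omega

theorem pt2Act2m_single_inl_of_last (j : Fin m) (hj : (j : ℕ) + 1 = m) :
    pt2Act2m m lam (Pi.single (Sum.inl j) 1) =
      Pi.single (Sum.inl j) 1 + lam • Pi.single (Sum.inr j) 1 := by
  funext k
  rcases k with k | k
  · simp [pt2Act2m, Pi.single_apply]
  · by_cases hk : 0 < (k : ℕ)
    · simp [pt2Act2m, Pi.single_apply, hk, Fin.ext_iff]
      omega
    · simp [pt2Act2m, Pi.single_apply, hk, Fin.ext_iff]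

theorem s1Act2m_s1Act2m [CharP F 2] (f : MvPolynomial (Fin m ⊕ Fin m) F) :
    s1Act2m m (s1Act2m m f) = f := by
  suffices h : (s1Act2m m).comp (s1Act2m (F := F) m) = AlgHom.id F _ from
    AlgHom.congr_fun h f
  apply algHom_ext
  rintro (j | j) <;> simp [s1Act2m, add_assoc, CharTwo.add_self_eq_zero]

theorem s2Act2m_s2Act2m [CharP F 2] (f : MvPolynomial (Fin m ⊕ Fin m) F) :
    s2Act2m m lam (s2Act2m m lam f) = f := by
  suffices h : (s2Act2m m lam).comp (s2Act2m m lam) = AlgHom.id F _ from AlgHom.congr_fun h f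
  apply algHom_ext
  rintro (j | j)
  · simp [s2Act2m]
  · by_cases hj : 0 < (j : ℕ) <;> simp [s2Act2m, hj] <;> ring_nf <;> simp [CharTwo.two_eq_zero]

theorem s1Act2m_s2Act2m_comm (f : MvPolynomial (Fin m ⊕ Fin m) F) :
    s1Act2m m (s2Act2m m lam f) = s2Act2m m lam (s1Act2m m f) := by
  suffices h : (s1Act2m m).comp (s2Act2m m lam) = (s2Act2m m lam).comp (s1Act2m m) from
    AlgHom.congr_fun h f
  apply algHom_ext
  rintro (j | j)
  · simp [s1Act2m, s2Act2m]
  · by_cases hj : 0 < (j : ℕ) <;> simp [s1Act2m, s2Act2m, hj] <;> ring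

theorem MvPolynomial.IsHomogeneous.s1Act2m {f : MvPolynomial (Fin m ⊕ Fin m) F} {n : ℕ}
    (hf : f.IsHomogeneous n) : (s1Act2m m f).IsHomogeneous n := by
  refine hf.aeval_of_degree_one _ ?_
  rintro (j | j)
  · exact isHomogeneous_X F _
  · exact (isHomogeneous_X F _).add (isHomogeneous_X F _)

theorem MvPolynomial.IsHomogeneous.s2Act2m {f : MvPolynomial (Fin m ⊕ Fin m) F} {n : ℕ}
    (hf : f.IsHomogeneous n) : (s2Act2m m lam f).IsHomogeneous n := by
  refine hf.aeval_of_degree_one _ ?_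
  rintro (j | j)
  · exact isHomogeneous_X F _
  · refine ((isHomogeneous_X F _).add (isHomogeneous_C_mul_X _ _)).add ?_
    split_ifs
    exacts [isHomogeneous_X F _, isHomogeneous_zero _ _ _]

variable (m lam) in
noncomputable def orbitProd2m (f : MvPolynomial (Fin m ⊕ Fin m) F) :
    MvPolynomial (Fin m ⊕ Fin m) F :=
  f * s1Act2m m f * s2Act2m m lam f * s1Act2m m (s2Act2m m lam f)

theorem s1Act2m_orbitProd2m [CharP F 2] (f : MvPolynomial (Fin m ⊕ Fin m) F) :
    s1Act2m m (orbitProd2m m lam f) = orbitProd2m m lam f := by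
  simp only [orbitProd2m, map_mul, s1Act2m_s1Act2m]
  ring

theorem s2Act2m_orbitProd2m [CharP F 2] (f : MvPolynomial (Fin m ⊕ Fin m) F) :
    s2Act2m m lam (orbitProd2m m lam f) = orbitProd2m m lam f := by
  simp only [orbitProd2m, map_mul, ← s1Act2m_s2Act2m_comm, s2Act2m_s2Act2m]
  ring

theorem MvPolynomial.IsHomogeneous.orbitProd2m {f : MvPolynomial (Fin m ⊕ Fin m) F}
    (hf : f.IsHomogeneous 1) : (orbitProd2m m lam f).IsHomogeneous 4 :=
  ((hf.mul hf.s1Act2m).mul hf.s2Act2m).mul hf.s2Act2m.s1Act2m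

theorem eval_orbitProd2m {v : Fin m ⊕ Fin m → F} (h1 : pt1Act2m m v = v)
    (h2 : pt2Act2m m lam v = v) (f : MvPolynomial (Fin m ⊕ Fin m) F) :
    eval v (orbitProd2m m lam f) = eval v f ^ 4 := by
  simp only [orbitProd2m, map_mul, eval_s1Act2m, eval_s2Act2m, h1, h2]
  ring

theorem pderiv_inl_s1Act2m (j : Fin m) (f : MvPolynomial (Fin m ⊕ Fin m) F) :
    pderiv (Sum.inl j) (s1Act2m m f) =
      s1Act2m m (pderiv (Sum.inl j) f + pderiv (Sum.inr j) f) := by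
  rw [s1Act2m, pderiv_aeval, Fintype.sum_sum_type]
  simp [pderiv_X, Pi.single_apply]

theorem eval_single_inr_eq_zero_of_odd [CharP F 2] {f : MvPolynomial (Fin m ⊕ Fin m) F}
    {d : ℕ} (hd : Odd d) (hf : f.IsHomogeneous d) (h1 : s1Act2m m f = f) (j : Fin m) :
    eval (Pi.single (Sum.inr j) 1) f = 0 := by
  have hfix : pt1Act2m m (Pi.single (Sum.inr j) (1 : F)) = Pi.single (Sum.inr j) 1 :=
    pt1Act2m_eq_self fun k => by simp
  have hderiv := congrArg (eval (Pi.single (Sum.inr j) (1 : F))) (pderiv_inl_s1Act2m j f)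
  rw [h1, eval_s1Act2m, hfix, map_add, left_eq_add, hf.eval_single_pderiv] at hderiv
  obtain ⟨k, rfl⟩ := hd
  simpa [CharTwo.two_eq_zero] using hderiv

theorem eval_single_inr_eq_zero_of_degree_two [CharP F 2] {f : MvPolynomial (Fin m ⊕ Fin m) F}
    (hf : f.IsHomogeneous 2) (h1 : s1Act2m m f = f) (h2 : s2Act2m m lam f = f) (i j : Fin m)
    (hij : (i : ℕ) + 1 = j) (hj : (j : ℕ) + 1 = m) :
    eval (Pi.single (Sum.inr j) 1) f = 0 := by
  obtain ⟨Q, hQ⟩ := hf.exists_quadraticMap_eval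
  rw [← hQ]
  refine Q.apply_eq_zero_of_invariant pt1Act2m_add pt2Act2m_add
    (fun v => by rw [hQ, hQ, ← eval_s1Act2m, h1]) (fun v => by rw [hQ, hQ, ← eval_s2Act2m, h2])
    lam (pt1Act2m_eq_self fun k => by simp) (pt1Act2m_single_inl j) (pt1Act2m_single_inl i)
    (pt2Act2m_single_inl_of_last j hj) (pt2Act2m_single_inl_of_succ i j hij)

variable (m lam) in
def invariantDegrees2m (v : Fin m ⊕ Fin m → F) : Set ℕ :=
  {d | 0 < d ∧ ∃ f : MvPolynomial (Fin m ⊕ Fin m) F,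
    s1Act2m m f = f ∧ s2Act2m m lam f = f ∧ f.IsHomogeneous d ∧ eval v f ≠ 0}

theorem eps2m_eq_sInf (v : Fin m ⊕ Fin m → F) :
    eps2m m lam v = sInf (invariantDegrees2m m lam v) := rfl

theorem one_mem_invariantDegrees2m {v : Fin m ⊕ Fin m → F} {j : Fin m}
    (hj : v (Sum.inl j) ≠ 0) : 1 ∈ invariantDegrees2m m lam v :=
  ⟨one_pos, X (Sum.inl j), by simp [s1Act2m], by simp [s2Act2m], isHomogeneous_X F _,
    by simpa using hj⟩

theorem four_mem_invariantDegrees2m [CharP F 2] {v : Fin m ⊕ Fin m → F}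
    (hx : ∀ j, v (Sum.inl j) = 0) {j : Fin m} (hj : v (Sum.inr j) ≠ 0) :
    4 ∈ invariantDegrees2m m lam v := by
  refine ⟨by norm_num, orbitProd2m m lam (X (Sum.inr j)), s1Act2m_orbitProd2m _,
    s2Act2m_orbitProd2m _, (isHomogeneous_X F _).orbitProd2m, ?_⟩
  rw [eval_orbitProd2m (pt1Act2m_eq_self hx) (pt2Act2m_eq_self hx), eval_X]
  exact pow_ne_zero _ hj

theorem eps2m_le_four [CharP F 2] {v : Fin m ⊕ Fin m → F} (hv : v ≠ 0) :
    eps2m m lam v ≤ 4 := by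
  rw [eps2m_eq_sInf]
  by_cases hx : ∀ j, v (Sum.inl j) = 0
  · obtain ⟨j, hj⟩ : ∃ j, v (Sum.inr j) ≠ 0 := by
      by_contra! hy
      exact hv (funext fun i => by rcases i with j | j <;> simp [hx, hy])
    exact Nat.sInf_le (four_mem_invariantDegrees2m hx hj)
  · obtain ⟨j, hj⟩ := not_forall.mp hx
    exact (Nat.sInf_le (one_mem_invariantDegrees2m hj)).trans (by norm_num)

theorem eps2m_single_inr_last [CharP F 2] (hm : 2 ≤ m) :
    eps2m m lam (Pi.single (Sum.inr ⟨m - 1, by omega⟩) 1) = 4 := by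
  have hx : ∀ j, (Pi.single (Sum.inr ⟨m - 1, by omega⟩) 1 : Fin m ⊕ Fin m → F) (Sum.inl j) = 0 :=
    fun j => by simp
  have h4 : 4 ∈ invariantDegrees2m m lam (Pi.single (Sum.inr ⟨m - 1, by omega⟩) 1) :=
    four_mem_invariantDegrees2m hx (j := ⟨m - 1, by omega⟩) (by simp)
  rw [eps2m_eq_sInf]
  refine le_antisymm (Nat.sInf_le h4) (le_csInf ⟨4, h4⟩ ?_)
  rintro d ⟨hd, f, h1, h2, hf, hev⟩
  by_contra! hlt
  interval_cases d
  · exact hev (eval_single_inr_eq_zero_of_odd odd_one hf h1 _)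
  · exact hev (eval_single_inr_eq_zero_of_degree_two hf h1 h2 ⟨m - 2, by omega⟩ _
      (by simp; omega) (by simp; omega))
  · exact hev (eval_single_inr_eq_zero_of_odd (by decide) hf h1 _)

end KleinFour

theorem stmt12_general {F : Type*} [Field F] [CharP F 2]
    (m : ℕ) (hm : 2 ≤ m) (lam : F) :
    delta2m (F := F) m lam = 4 ∧ gamma2m (F := F) m lam = 4 := by
  set v₀ : Fin m ⊕ Fin m → F := Pi.single (Sum.inr ⟨m - 1, by omega⟩) 1
  have hv₀ : v₀ ≠ 0 := fun h => by simpa [v₀] using congrFun h (Sum.inr ⟨m - 1, by omega⟩)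
  have hx : ∀ j, v₀ (Sum.inl j) = 0 := fun j => by simp [v₀]
  have heps : eps2m m lam v₀ = 4 := eps2m_single_inr_last hm
  constructor
  · refine IsGreatest.csSup_eq ⟨⟨v₀, hv₀, pt1Act2m_eq_self hx, pt2Act2m_eq_self hx, heps.symm⟩, ?_⟩
    rintro _ ⟨v, hv, -, -, rfl⟩
    exact eps2m_le_four hv
  · refine IsGreatest.csSup_eq ⟨⟨v₀, hv₀, heps.symm⟩, ?_⟩
    rintro _ ⟨v, hv, rfl⟩
    exact eps2m_le_four hv

theorem stmt12 {F : Type*} [Field F] [IsAlgClosed F] [CharP F 2]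
    (m : ℕ) (hm : 2 ≤ m) (lam : F) :
    delta2m (F := F) m lam = 4 ∧ gamma2m (F := F) m lam = 4 :=
  stmt12_general m hm lam
end

section
/- Let $G$ be a finite group of order $pm$ with $p$ prime and $\gcd(p,m) = 1$, acting on a finite-dimensional module $V$ over an algebraically closed field $F$ of characteristic $p$. Then $\delta(G, V) \in \{0, 1, p\}$. -/
/-!
If `f` is an invariant, homogeneous of degree `d`, with `f(v) ≠ 0` at a fixed point `v`, then so
is the directional derivative `∂_v f`, of degree `d - 1`: it is invariant because `v` is fixed,
and `(∂_v f)(v) = d f(v)` by Euler's identity. Hence the minimal degree `ε(G,v)` is `1` or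
divisible by `p`. On the other hand, for a subgroup `H` of order `p` (index `m`, prime to `p`)
and a coordinate with `v i ≠ 0`, the relative transfer `∑_{gH ∈ G/H} g·∏_{h ∈ H} h·X_i` is an
invariant of degree `p` taking the value `m · (v i)^p ≠ 0` at `v`, so `ε(G,v) ≤ p`.
-/

open MvPolynomial

/-- The action of a matrix `A` on polynomials, substituting each variable `X i`
by the linear form `∑ j, A i j • X j`, so that `(matAct A f)(v) = f(A ⬝ v)`. -/
noncomputable def matAct {F : Type*} [Field F] {N : ℕ} (A : Matrix (Fin N) (Fin N) F) :
    MvPolynomial (Fin N) F →ₐ[F] MvPolynomial (Fin N) F :=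
  aeval fun i => ∑ j, C (A i j) * X j

/-- `f` is an invariant of the representation `ρ`: `σ(f) = f ∘ σ⁻¹ = f` for all `σ ∈ G`. -/
def IsInv {F : Type*} [Field F] {N : ℕ} {G : Type*} [Group G]
    (ρ : G →* Matrix.GeneralLinearGroup (Fin N) F) (f : MvPolynomial (Fin N) F) : Prop :=
  ∀ σ : G, matAct ((ρ σ⁻¹ : Matrix.GeneralLinearGroup (Fin N) F) : Matrix (Fin N) (Fin N) F) f = f

/-- `v` is a fixed point of the representation `ρ`. -/
def IsFixedPt {F : Type*} [Field F] {N : ℕ} {G : Type*} [Group G]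
    (ρ : G →* Matrix.GeneralLinearGroup (Fin N) F) (v : Fin N → F) : Prop :=
  ∀ σ : G, Matrix.mulVec ((ρ σ : Matrix.GeneralLinearGroup (Fin N) F) : Matrix (Fin N) (Fin N) F) v = v

/-- `ε(G,v)`: minimal positive degree of a homogeneous invariant not vanishing at `v`. -/
noncomputable def epsGV {F : Type*} [Field F] {N : ℕ} {G : Type*} [Group G]
    (ρ : G →* Matrix.GeneralLinearGroup (Fin N) F) (v : Fin N → F) : ℕ :=
  sInf {d : ℕ | 0 < d ∧ ∃ f : MvPolynomial (Fin N) F,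
    IsInv ρ f ∧ f.IsHomogeneous d ∧ eval v f ≠ 0}

/-- `δ(G,V)`: the degree of reductivity, i.e. the supremum of `ε(G,v)` over nonzero
fixed points `v` (and `0` if `V^G = {0}`). -/
noncomputable def deltaGV {F : Type*} [Field F] {N : ℕ} {G : Type*} [Group G]
    (ρ : G →* Matrix.GeneralLinearGroup (Fin N) F) : ℕ :=
  sSup {e : ℕ | ∃ v : Fin N → F, v ≠ 0 ∧ IsFixedPt ρ v ∧ e = epsGV ρ v}

namespace MvPolynomial

variable {R σ A : Type*} [CommSemiring R] [CommSemiring A] [Algebra R A]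

theorem derivation_algHom_eq_of_X (φ : MvPolynomial σ R →ₐ[R] A) (D : Derivation R A A)
    (D' : Derivation R (MvPolynomial σ R) (MvPolynomial σ R))
    (h : ∀ i, D (φ (X i)) = φ (D' (X i))) (f : MvPolynomial σ R) :
    D (φ f) = φ (D' f) := by
  induction f using MvPolynomial.induction_on with
  | C a => simp [derivation_C]
  | add f g hf hg => simp only [map_add, hf, hg]
  | mul_X f i hf =>
    simp only [map_mul, Derivation.leibniz, smul_eq_mul, hf, h, map_add]

variable [Fintype σ]

noncomputable def dirDeriv (v : σ → R) : Derivation R (MvPolynomial σ R) (MvPolynomial σ R) :=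
  ∑ i, v i • pderiv i

theorem dirDeriv_apply (v : σ → R) (f : MvPolynomial σ R) :
    dirDeriv v f = ∑ i, C (v i) * pderiv i f := by
  rw [dirDeriv, ← Derivation.coeFnAddMonoidHom_apply, map_sum, Finset.sum_apply]
  simp [smul_eq_C_mul]

theorem dirDeriv_X (v : σ → R) (i : σ) : dirDeriv v (X i) = C (v i) := by
  classical
  simp [dirDeriv_apply, pderiv_X, Pi.single_apply]

theorem IsHomogeneous.dirDeriv {f : MvPolynomial σ R} {n : ℕ} (hf : f.IsHomogeneous n)
    (v : σ → R) : (dirDeriv v f).IsHomogeneous (n - 1) := by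
  rw [dirDeriv_apply]
  exact IsHomogeneous.sum _ _ _ fun i _ => hf.pderiv.C_mul _

theorem eval_dirDeriv_self {f : MvPolynomial σ R} {n : ℕ} (hf : f.IsHomogeneous n)
    (v : σ → R) : eval v (dirDeriv v f) = n * eval v f := by
  have := congrArg (eval v) hf.sum_X_mul_pderiv
  simpa [dirDeriv_apply] using this

end MvPolynomial

section MatAct

variable {F : Type*} [Field F] {N : ℕ}

theorem matAct_matAct (A B : Matrix (Fin N) (Fin N) F) (f : MvPolynomial (Fin N) F) :
    matAct A (matAct B f) = matAct (B * A) f := by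
  simp only [matAct, comp_aeval_apply]
  congr 1
  ext i : 1
  simp only [map_sum, map_mul, aeval_X, aeval_C, algebraMap_eq, Matrix.mul_apply, Finset.mul_sum,
    Finset.sum_mul, ← mul_assoc]
  exact Finset.sum_comm

theorem eval_matAct (A : Matrix (Fin N) (Fin N) F) (v : Fin N → F) (f : MvPolynomial (Fin N) F) :
    eval v (matAct A f) = eval (A.mulVec v) f := by
  change aeval v (matAct A f) = aeval (A.mulVec v) f
  rw [matAct, comp_aeval_apply]
  congr 1
  ext i
  simp [Matrix.mulVec, dotProduct]

theorem MvPolynomial.IsHomogeneous.matAct {f : MvPolynomial (Fin N) F} {n : ℕ}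
    (hf : f.IsHomogeneous n) (A : Matrix (Fin N) (Fin N) F) : (matAct A f).IsHomogeneous n := by
  rw [_root_.matAct, aeval_def, ← one_mul n]
  exact hf.eval₂ _ _ (fun r => isHomogeneous_C _ r)
    (fun i => IsHomogeneous.sum _ _ _ fun j _ => isHomogeneous_C_mul_X _ _)

theorem dirDeriv_matAct (A : Matrix (Fin N) (Fin N) F) (v : Fin N → F)
    (f : MvPolynomial (Fin N) F) :
    dirDeriv v (matAct A f) = matAct A (dirDeriv (A.mulVec v) f) := by
  refine derivation_algHom_eq_of_X _ _ _ (fun i => ?_) f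
  simp [dirDeriv_X, Matrix.mulVec, dotProduct, matAct]

end MatAct

section Representation

variable {F : Type*} [Field F] {N : ℕ} {G : Type*} [Group G]
  (ρ : G →* Matrix.GeneralLinearGroup (Fin N) F)

noncomputable def polyAct (g : G) : MvPolynomial (Fin N) F →ₐ[F] MvPolynomial (Fin N) F :=
  matAct ((ρ g⁻¹ : Matrix.GeneralLinearGroup (Fin N) F) : Matrix (Fin N) (Fin N) F)

theorem polyAct_polyAct (g h : G) (f : MvPolynomial (Fin N) F) :
    polyAct ρ g (polyAct ρ h f) = polyAct ρ (g * h) f := by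
  simp only [polyAct, matAct_matAct, mul_inv_rev, map_mul, Units.val_mul]

variable {ρ}

theorem eval_polyAct {v : Fin N → F} (hv : IsFixedPt ρ v) (g : G) (f : MvPolynomial (Fin N) F) :
    eval v (polyAct ρ g f) = eval v f := by
  rw [polyAct, eval_matAct, hv]

theorem IsInv.dirDeriv {f : MvPolynomial (Fin N) F} {v : Fin N → F} (hf : IsInv ρ f)
    (hv : IsFixedPt ρ v) : IsInv ρ (dirDeriv v f) := fun g => by
  have h := dirDeriv_matAct ((ρ g⁻¹ : Matrix.GeneralLinearGroup (Fin N) F) :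
    Matrix (Fin N) (Fin N) F) v f
  rw [hv g⁻¹, hf g] at h
  exact h.symm

variable (ρ) in
def HasInvOfDegree (v : Fin N → F) (d : ℕ) : Prop :=
  ∃ f : MvPolynomial (Fin N) F, IsInv ρ f ∧ f.IsHomogeneous d ∧ eval v f ≠ 0

variable {v : Fin N → F} {d : ℕ}

theorem epsGV_le (hd : 0 < d) (h : HasInvOfDegree ρ v d) : epsGV ρ v ≤ d :=
  Nat.sInf_le (show d ∈ {d | 0 < d ∧ HasInvOfDegree ρ v d} from ⟨hd, h⟩)

theorem epsGV_pos_and_hasInvOfDegree (hd : 0 < d) (h : HasInvOfDegree ρ v d) :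
    0 < epsGV ρ v ∧ HasInvOfDegree ρ v (epsGV ρ v) :=
  Nat.sInf_mem (s := {d | 0 < d ∧ HasInvOfDegree ρ v d}) ⟨d, hd, h⟩

theorem HasInvOfDegree.pred (hv : IsFixedPt ρ v) (h : HasInvOfDegree ρ v d) (hd : (d : F) ≠ 0) :
    HasInvOfDegree ρ v (d - 1) := by
  obtain ⟨f, hf, hfd, hfv⟩ := h
  refine ⟨dirDeriv v f, hf.dirDeriv hv, hfd.dirDeriv v, ?_⟩
  rw [eval_dirDeriv_self hfd]
  exact mul_ne_zero hd hfv

theorem epsGV_eq_one_or_cast_eq_zero (hv : IsFixedPt ρ v) (hd : 0 < d)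
    (h : HasInvOfDegree ρ v d) : epsGV ρ v = 1 ∨ (epsGV ρ v : F) = 0 := by
  obtain ⟨hpos, hε⟩ := epsGV_pos_and_hasInvOfDegree hd h
  by_contra! hne
  have := epsGV_le (by omega) (hε.pred hv hne.2)
  omega

section Transfer

variable (ρ) (H : Subgroup G)

noncomputable def subgroupNorm [Fintype H] (f : MvPolynomial (Fin N) F) :
    MvPolynomial (Fin N) F :=
  ∏ h : H, polyAct ρ h f

-- Independent of the representatives `q.out` as soon as `f` is `H`-invariant.
noncomputable def relTransfer [Fintype (G ⧸ H)] (f : MvPolynomial (Fin N) F) :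
    MvPolynomial (Fin N) F :=
  ∑ q : G ⧸ H, polyAct ρ q.out f

variable {ρ H} {f : MvPolynomial (Fin N) F} {n : ℕ}

theorem polyAct_subgroupNorm [Fintype H] {g : G} (hg : g ∈ H) :
    polyAct ρ g (subgroupNorm ρ H f) = subgroupNorm ρ H f := by
  simp only [subgroupNorm, map_prod, polyAct_polyAct]
  exact Equiv.prod_comp (Equiv.mulLeft (⟨g, hg⟩ : H)) fun h : H => polyAct ρ h f

theorem MvPolynomial.IsHomogeneous.subgroupNorm [Fintype H] (hf : f.IsHomogeneous n) :
    (subgroupNorm ρ H f).IsHomogeneous (Nat.card H * n) := by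
  unfold _root_.subgroupNorm
  simpa [Nat.card_eq_fintype_card] using
    IsHomogeneous.prod Finset.univ (fun h : H => polyAct ρ h f) (fun _ => n)
      fun h _ => hf.matAct _

theorem eval_subgroupNorm [Fintype H] (hv : IsFixedPt ρ v) :
    eval v (subgroupNorm ρ H f) = eval v f ^ Nat.card H := by
  simp [subgroupNorm, eval_polyAct hv, Nat.card_eq_fintype_card]

theorem polyAct_eq_of_mk_eq (hf : ∀ h ∈ H, polyAct ρ h f = f) {a b : G}
    (hab : (a : G ⧸ H) = b) : polyAct ρ a f = polyAct ρ b f := by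
  rw [← mul_inv_cancel_left a b, ← polyAct_polyAct, hf _ (QuotientGroup.eq.mp hab)]

theorem isInv_relTransfer [Fintype (G ⧸ H)] (hf : ∀ h ∈ H, polyAct ρ h f = f) :
    IsInv ρ (relTransfer ρ H f) := fun g => by
  change polyAct ρ g _ = _
  simp only [relTransfer, map_sum, polyAct_polyAct]
  calc ∑ q : G ⧸ H, polyAct ρ (g * q.out) f = ∑ q : G ⧸ H, polyAct ρ (g • q).out f :=
        Finset.sum_congr rfl fun q _ => polyAct_eq_of_mk_eq hf <| by
          rw [QuotientGroup.out_eq', ← smul_eq_mul, MulAction.Quotient.mk_smul_out]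
    _ = ∑ q : G ⧸ H, polyAct ρ q.out f :=
        Equiv.sum_comp (MulAction.toPerm g) fun q : G ⧸ H => polyAct ρ q.out f

theorem MvPolynomial.IsHomogeneous.relTransfer [Fintype (G ⧸ H)] (hf : f.IsHomogeneous n) :
    (relTransfer ρ H f).IsHomogeneous n :=
  IsHomogeneous.sum _ _ _ fun _ _ => hf.matAct _

theorem eval_relTransfer [Fintype (G ⧸ H)] (hv : IsFixedPt ρ v) :
    eval v (relTransfer ρ H f) = H.index * eval v f := by
  simp [relTransfer, eval_polyAct hv, Subgroup.index, Nat.card_eq_fintype_card]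

theorem hasInvOfDegree_card [Fintype H] [Fintype (G ⧸ H)] (hH : (H.index : F) ≠ 0)
    (hv0 : v ≠ 0) (hv : IsFixedPt ρ v) : HasInvOfDegree ρ v (Nat.card H) := by
  obtain ⟨i, hi⟩ := Function.ne_iff.mp hv0
  refine ⟨relTransfer ρ H (subgroupNorm ρ H (X i)),
    isInv_relTransfer fun _ hh => polyAct_subgroupNorm hh, ?_, ?_⟩
  · have hnorm := (isHomogeneous_X F i).subgroupNorm (ρ := ρ) (H := H)
    simpa using hnorm.relTransfer (ρ := ρ) (H := H)
  · rw [eval_relTransfer hv, eval_subgroupNorm hv, eval_X]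
    exact mul_ne_zero hH (pow_ne_zero _ hi)

end Transfer

end Representation

section Degrees

variable {F : Type*} [Field F] {N : ℕ} {G : Type*} [Group G]
  {ρ : G →* Matrix.GeneralLinearGroup (Fin N) F}

theorem epsGV_eq_one_or_eq_of_card_eq [Finite G] {p : ℕ} [CharP F p] {H : Subgroup G}
    (hHp : Nat.card H = p) (hH : (H.index : F) ≠ 0) {v : Fin N → F} (hv0 : v ≠ 0)
    (hv : IsFixedPt ρ v) : epsGV ρ v = 1 ∨ epsGV ρ v = p := by
  have := Fintype.ofFinite H
  have := Fintype.ofFinite (G ⧸ H)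
  have hp : 0 < p := hHp ▸ Nat.card_pos
  have hinv := hasInvOfDegree_card hH hv0 hv
  rw [hHp] at hinv
  have hle := epsGV_le hp hinv
  have hpos := (epsGV_pos_and_hasInvOfDegree hp hinv).1
  refine (epsGV_eq_one_or_cast_eq_zero hv hp hinv).imp_right fun hε => ?_
  exact le_antisymm hle (Nat.le_of_dvd hpos ((CharP.cast_eq_zero_iff F p _).mp hε))

theorem deltaGV_eq_zero_or_mem {S : Set ℕ} (hS : S.Finite)
    (h : ∀ v, v ≠ 0 → IsFixedPt ρ v → epsGV ρ v ∈ S) : deltaGV ρ = 0 ∨ deltaGV ρ ∈ S := by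
  set E := {e : ℕ | ∃ v : Fin N → F, v ≠ 0 ∧ IsFixedPt ρ v ∧ e = epsGV ρ v}
  have hES : E ⊆ S := by
    rintro _ ⟨v, hv0, hv, rfl⟩
    exact h v hv0 hv
  rcases E.eq_empty_or_nonempty with hE | hE
  · left
    simp [deltaGV, E, hE]
  · right
    exact hES (Nat.sSup_mem hE (hS.bddAbove.mono hES))

end Degrees

theorem Subgroup.exists_card_eq_index_eq {G : Type*} [Group G] [Finite G] {p m : ℕ}
    (hp : p.Prime) (hcard : Nat.card G = p * m) :
    ∃ H : Subgroup G, Nat.card H = p ∧ H.index = m := by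
  have := Fact.mk hp
  obtain ⟨g, hg⟩ := exists_prime_orderOf_dvd_card' p (hcard ▸ dvd_mul_right p m)
  refine ⟨Subgroup.zpowers g, by rw [Nat.card_zpowers, hg], ?_⟩
  have := (Subgroup.zpowers g).card_mul_index
  rw [Nat.card_zpowers, hg, hcard] at this
  exact Nat.eq_of_mul_eq_mul_left hp.pos this

theorem stmt13_general {F : Type*} [Field F] {p m : ℕ} (hp : p.Prime) [CharP F p]
    {G : Type*} [Group G] [Fintype G]
    (hcard : Fintype.card G = p * m) (hcop : Nat.Coprime p m)
    {N : ℕ} (ρ : G →* Matrix.GeneralLinearGroup (Fin N) F) :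
    deltaGV ρ = 0 ∨ deltaGV ρ = 1 ∨ deltaGV ρ = p := by
  obtain ⟨H, hHp, hHm⟩ : ∃ H : Subgroup G, Nat.card H = p ∧ H.index = m :=
    Subgroup.exists_card_eq_index_eq hp (by rw [Nat.card_eq_fintype_card, hcard])
  have hH : (H.index : F) ≠ 0 := by
    rwa [hHm, Ne, CharP.cast_eq_zero_iff F p, ← hp.coprime_iff_not_dvd]
  simpa using deltaGV_eq_zero_or_mem (Set.toFinite {1, p})
    fun v hv0 hv => epsGV_eq_one_or_eq_of_card_eq hHp hH hv0 hv (ρ := ρ)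

theorem stmt13 {F : Type*} [Field F] [IsAlgClosed F] {p m : ℕ} (hp : p.Prime) [CharP F p]
    {G : Type*} [Group G] [Fintype G]
    (hcard : Fintype.card G = p * m) (hcop : Nat.Coprime p m)
    {N : ℕ} (ρ : G →* Matrix.GeneralLinearGroup (Fin N) F) :
    deltaGV ρ = 0 ∨ deltaGV ρ = 1 ∨ deltaGV ρ = p :=
  stmt13_general hp hcard hcop ρ
end

section
/- Let $p$ be prime, $F$ an algebraically closed field of characteristic $p$, and $G \subseteq S_p$ any subgroup whose order is divisible by $p$, acting on $V = F^p$ by permuting coordinates. Then $\delta(G, V) = p$. -/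
open MvPolynomial

/-- `f` is invariant under the subgroup `G ≤ S_p` permuting the variables. -/
def permInv {F : Type*} [Field F] {p : ℕ} (G : Subgroup (Equiv.Perm (Fin p)))
    (f : MvPolynomial (Fin p) F) : Prop :=
  ∀ g ∈ G, rename (⇑g) f = f

/-- `v` is fixed by the coordinate-permutation action of `G`. -/
def permFixed {F : Type*} [Field F] {p : ℕ} (G : Subgroup (Equiv.Perm (Fin p)))
    (v : Fin p → F) : Prop :=
  ∀ g ∈ G, v ∘ ⇑g = v

/-- `ε(G,v)` for `G ≤ S_p` acting on `F^p` by permuting coordinates. -/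
noncomputable def epsPerm {F : Type*} [Field F] {p : ℕ} (G : Subgroup (Equiv.Perm (Fin p)))
    (v : Fin p → F) : ℕ :=
  sInf {d : ℕ | 0 < d ∧ ∃ f : MvPolynomial (Fin p) F,
    permInv G f ∧ f.IsHomogeneous d ∧ eval v f ≠ 0}

/-- `δ(G, F^p)` for the permutation action. -/
noncomputable def deltaPerm {F : Type*} [Field F] {p : ℕ}
    (G : Subgroup (Equiv.Perm (Fin p))) : ℕ :=
  sSup {e : ℕ | ∃ v : Fin p → F, v ≠ 0 ∧ permFixed G v ∧ e = epsPerm (F := F) G v}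

/-!
A subgroup of `S_p` of order divisible by `p` contains a `p`-cycle `σ`, so its nonzero fixed
vectors are the constant vectors `c • 𝟙`, `c ≠ 0`, and `∏ᵢ Xᵢ` gives `ε(G, c • 𝟙) ≤ p`.
Conversely, if `f` is `σ`-invariant and homogeneous of degree `d`, Euler's identity at `c • 𝟙`
reads `∑ᵢ c ∂ᵢf(c • 𝟙) = d f(c • 𝟙)`. Since `σ` permutes the terms on the left transitively, they
are all equal and sum to zero in characteristic `p`; hence `f(c • 𝟙) = 0` when `0 < d < p`.
-/

namespace Equiv.Perm

variable {α : Type*} [Fintype α] {σ : Perm α}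

theorem isCycle_and_support_eq_univ_of_orderOf_eq_card [DecidableEq α]
    (hp : (Fintype.card α).Prime) (h : orderOf σ = Fintype.card α) :
    σ.IsCycle ∧ σ.support = Finset.univ := by
  have hσ : σ.IsCycle := isCycle_of_prime_order'' hp h
  exact ⟨hσ, Finset.eq_univ_of_card _ (hσ.orderOf ▸ h)⟩

theorem IsCycle.apply_eq_of_comp_eq [DecidableEq α] (hσ : σ.IsCycle)
    (hs : σ.support = Finset.univ) {M : Type*} {v : α → M} (hv : v ∘ σ = v) (i j : α) :
    v i = v j := by
  have hmoves (k : α) : σ k ≠ k := mem_support.mp (hs ▸ Finset.mem_univ k)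
  obtain ⟨n, rfl⟩ := hσ.exists_pow_eq (hmoves i) (hmoves j)
  have hv' : Function.Semiconj v σ id := fun k => congrFun hv k
  rw [coe_pow, hv'.iterate_right n i, Function.iterate_id, id]

end Equiv.Perm

namespace MvPolynomial

variable {F α : Type*} [Field F] [Fintype α] [DecidableEq α]

theorem natCast_mul_eval_const_eq_zero [CharP F (Fintype.card α)] {σ : Equiv.Perm α}
    (hσ : σ.IsCycle) (hs : σ.support = Finset.univ) {f : MvPolynomial α F} {d : ℕ}
    (hf : f.IsHomogeneous d) (hinv : rename σ f = f) (c : F) :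
    (d : F) * eval (fun _ => c) f = 0 := by
  set v : α → F := fun _ => c
  have hinv_pderiv : (fun i => eval v (pderiv i f)) ∘ σ = fun i => eval v (pderiv i f) := by
    funext i
    conv_lhs => rw [Function.comp_apply, ← hinv, pderiv_rename σ.injective, eval_rename]
    rfl
  have hsum : ∑ i, v i * eval v (pderiv i f) = 0 := by
    rcases isEmpty_or_nonempty α with _ | ⟨⟨j⟩⟩
    · simp
    · rw [Finset.sum_congr rfl fun i _ =>
          congrArg (c * ·) (hσ.apply_eq_of_comp_eq hs hinv_pderiv i j),
        Finset.sum_const, Finset.card_univ, nsmul_eq_mul, CharP.cast_eq_zero, zero_mul]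
  have euler := congrArg (eval v) hf.sum_X_mul_pderiv
  simp only [map_sum, map_mul, eval_X, nsmul_eq_mul, map_natCast] at euler
  rw [← euler, hsum]

end MvPolynomial

section PermutationAction

variable {F : Type*} [Field F] {p : ℕ} {G : Subgroup (Equiv.Perm (Fin p))}
  {σ : Equiv.Perm (Fin p)}

theorem permInv_prod_X : permInv G (∏ i, X i : MvPolynomial (Fin p) F) := by
  intro g _
  simp only [map_prod, rename_X]
  exact Equiv.prod_comp g X

theorem eq_const_of_permFixed (hσG : σ ∈ G) (hσ : σ.IsCycle) (hs : σ.support = Finset.univ)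
    {v : Fin p → F} (hv : permFixed G v) (i : Fin p) : v = fun _ => v i :=
  funext fun j => hσ.apply_eq_of_comp_eq hs (hv σ hσG) j i

theorem epsPerm_const [CharP F p] (hσG : σ ∈ G) (hσ : σ.IsCycle) (hs : σ.support = Finset.univ)
    {c : F} (hc : c ≠ 0) : epsPerm G (fun _ => c) = p := by
  refine IsLeast.csInf_eq ⟨⟨Fin.pos hσ.choose, ∏ i, X i, permInv_prod_X, ?_, ?_⟩, ?_⟩
  · simpa using IsHomogeneous.prod (φ := fun i : Fin p => (X i : MvPolynomial (Fin p) F))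
      (n := fun _ => 1) Finset.univ (fun i _ => isHomogeneous_X F i)
  · simpa [Finset.prod_const] using pow_ne_zero p hc
  · rintro d ⟨hd0, f, hf, hhom, heval⟩
    by_contra! hdp
    have hd : (d : F) ≠ 0 := by
      rw [Ne, CharP.cast_eq_zero_iff F p]
      exact Nat.not_dvd_of_pos_of_lt hd0 hdp
    have : CharP F (Fintype.card (Fin p)) := by rwa [Fintype.card_fin]
    exact heval ((mul_eq_zero.mp
      (natCast_mul_eval_const_eq_zero hσ hs hhom (hf σ hσG) c)).resolve_left hd)

end PermutationAction

theorem stmt16_general {F : Type*} [Field F] {p : ℕ} (hp : p.Prime) [CharP F p]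
    (G : Subgroup (Equiv.Perm (Fin p))) (hG : p ∣ Nat.card G) :
    deltaPerm (F := F) G = p := by
  have : Fact p.Prime := ⟨hp⟩
  obtain ⟨⟨σ, hσG⟩, hord⟩ := exists_prime_orderOf_dvd_card' p hG
  obtain ⟨hσ, hs⟩ := Equiv.Perm.isCycle_and_support_eq_univ_of_orderOf_eq_card (σ := σ)
    (by rwa [Fintype.card_fin]) (by rwa [Fintype.card_fin, ← Subgroup.orderOf_mk])
  have i₀ : Fin p := ⟨0, hp.pos⟩
  refine IsGreatest.csSup_eq ⟨⟨fun _ => 1, fun h => one_ne_zero (congrFun h i₀),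
    fun _ _ => rfl, (epsPerm_const hσG hσ hs one_ne_zero).symm⟩, ?_⟩
  rintro e ⟨v, hv0, hv, rfl⟩
  have hv_const := eq_const_of_permFixed hσG hσ hs hv i₀
  have hc : v i₀ ≠ 0 := fun h => hv0 (hv_const.trans (by rw [h]; rfl))
  rw [hv_const, epsPerm_const hσG hσ hs hc]

theorem stmt16 {F : Type*} [Field F] [IsAlgClosed F] {p : ℕ} (hp : p.Prime) [CharP F p]
    (G : Subgroup (Equiv.Perm (Fin p))) (hG : p ∣ Nat.card G) :
    deltaPerm (F := F) G = p :=
  stmt16_general hp G hG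
end

section
/- Let $F$ be an algebraically closed field of characteristic $p > 0$, $m$ coprime to $p$ with $m > 1$, $r > 0$, $\tilde G = Z_{p^r m}$, and $\lambda \in F$ a primitive $m$-th root of unity. Consider the faithful $\tilde G$-module $V = W_{p^r, 1} \oplus W_{1,\lambda}$, where $W_{p^r,1}$ is the $p^r$-dimensional indecomposable module on which the order-$m$ subgroup acts trivially, and $W_{1,\lambda}$ is the one-dimensional module on which the order-$p^r$ subgroup acts trivially and a generator of the order-$m$ subgroup acts by $\lambda$. Then $\gamma(\tilde G, V) = \max\{p^r, m\} < p^r m = |\tilde G|$. -/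
open MvPolynomial

/-- Action of the generator `σ` of the `p^r`-part of `Z_{p^r m}` on
`F[W_{p^r,1} ⊕ W_{1,λ}]`: a unipotent Jordan block on the first `p^r` variables
(indices `0, …, p^r - 1`), trivial on the last variable (index `p^r`). -/
noncomputable def sigAct18 {F : Type*} [Field F] (q : ℕ) :
    MvPolynomial (Fin (q + 1)) F →ₐ[F] MvPolynomial (Fin (q + 1)) F :=
  aeval fun i => X i + if _ : 0 < (i : ℕ) ∧ (i : ℕ) < q then
    X ⟨(i : ℕ) - 1, lt_of_le_of_lt (Nat.sub_le _ _) i.isLt⟩ else 0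

/-- Action of the generator `α` of the `m`-part: trivial on `W_{p^r,1}`,
multiplication by `λ` on `W_{1,λ}` (the last variable). -/
noncomputable def alpAct18 {F : Type*} [Field F] (q : ℕ) (lam : F) :
    MvPolynomial (Fin (q + 1)) F →ₐ[F] MvPolynomial (Fin (q + 1)) F :=
  aeval fun i => if (i : ℕ) < q then X i else C lam * X i

/-- `ε(G̃,v)` for `G̃ = Z_{p^r m}` acting on `V = W_{p^r,1} ⊕ W_{1,λ}`. -/
noncomputable def eps18 {F : Type*} [Field F] (q : ℕ) (lam : F) (v : Fin (q + 1) → F) : ℕ :=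
  sInf {d : ℕ | 0 < d ∧ ∃ f : MvPolynomial (Fin (q + 1)) F,
    sigAct18 q f = f ∧ alpAct18 q lam f = f ∧ f.IsHomogeneous d ∧ eval v f ≠ 0}

/-- `γ(G̃, V)`. -/
noncomputable def gamma18 {F : Type*} [Field F] (q : ℕ) (lam : F) : ℕ :=
  sSup {e : ℕ | ∃ v : Fin (q + 1) → F, v ≠ 0 ∧ e = eps18 q lam v}

/-! Write `q = p ^ r` and `σ`, `α` for the two generators. Every nonzero `v` has an invariant of
degree at most `max q m` not vanishing at it: if its first nonzero coordinate `j` lies in the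
Jordan block, take the norm `∏_{k<q} σ^k X_j` (which is `α`-invariant because `α` commutes with
`σ` and fixes `X_j`, and takes the value `v_j ^ q` at `v`); otherwise take `X_q ^ m`.
Conversely, a homogeneous invariant of degree `d` that does not vanish at `e_q` has `λ ^ d = 1`,
so `m ∣ d`; and one that does not vanish at `e_{q-1}` has `q ∣ d`: evaluating at the point
`(t^{q-1}, …, t, 1, 0)` over `F[t]/(t^q)`, on which `σ` acts as multiplication by `1 + t`, gives
`t^q ∣ (1 + t)^d - 1`, which in characteristic `p` forces `q ∣ d`. -/

namespace MvPolynomial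

variable {R S σ : Type*} [CommSemiring R] [CommSemiring S] [Algebra R S]

theorem IsHomogeneous.aeval_mul_left {f : MvPolynomial σ R} {d : ℕ} (hf : f.IsHomogeneous d)
    (c : S) (w : σ → S) :
    MvPolynomial.aeval (fun i => c * w i) f = c ^ d * MvPolynomial.aeval w f := by
  rw [aeval_def, aeval_def, eval₂_eq, eval₂_eq, Finset.mul_sum]
  refine Finset.sum_congr rfl fun a ha => ?_
  have hd : ∑ i ∈ a.support, a i = d := by
    simpa [Finsupp.weight_apply, Finsupp.sum] using hf (mem_support_iff.mp ha)
  simp_rw [mul_pow, Finset.prod_mul_distrib, Finset.prod_pow_eq_pow_sum, hd]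
  ring

theorem aeval_algHom_apply (φ : MvPolynomial σ R →ₐ[R] MvPolynomial σ R) (w : σ → S)
    (f : MvPolynomial σ R) : aeval w (φ f) = aeval (fun i => aeval w (φ (X i))) f := by
  conv_lhs => rw [aeval_unique φ]
  rw [comp_aeval_apply]
  rfl

theorem aeval_eq_pow_mul_of_map_eq_self {φ : MvPolynomial σ R →ₐ[R] MvPolynomial σ R}
    {f : MvPolynomial σ R} {d : ℕ} (hf : f.IsHomogeneous d) (hφ : φ f = f)
    {c : S} {w : σ → S}
    (hw : ∀ i, aeval w (φ (X i)) = c * w i) : aeval w f = c ^ d * aeval w f := by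
  calc aeval w f = aeval (fun i => aeval w (φ (X i))) f := by rw [← aeval_algHom_apply, hφ]
    _ = c ^ d * aeval w f := by simp only [hw]; exact hf.aeval_mul_left c w

end MvPolynomial

namespace Polynomial

theorem pow_dvd_of_X_pow_dvd_one_add_X_pow_sub_one {R : Type*} [CommRing R] {p : ℕ}
    [Fact p.Prime] [CharP R p] {r d : ℕ} (h : (X : R[X]) ^ p ^ r ∣ (1 + X) ^ d - 1) :
    p ^ r ∣ d := by
  have hp : p.Prime := Fact.out
  rcases eq_or_ne d 0 with rfl | hd
  · exact dvd_zero _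
  obtain ⟨s, e, hpe, rfl⟩ := Nat.exists_eq_pow_mul_and_not_dvd hd p hp.ne_one
  by_contra hrs
  have hsr : s < r := by
    by_contra! hrs'
    exact hrs (Dvd.dvd.mul_right (pow_dvd_pow p hrs') e)
  have hexpand : ((1 : R[X]) + X) ^ (p ^ s * e) = expand R (p ^ s) ((1 + X) ^ e) := by
    rw [pow_mul, add_pow_char_pow, one_pow, map_pow, map_add, map_one, expand_X]
  have hcoeff : (expand R (p ^ s) ((1 + X) ^ e)).coeff (p ^ s * 1) = e := by
    rw [coeff_expand_mul' (pow_pos hp.pos s), coeff_one_add_X_pow, Nat.choose_one_right]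
  have hvanish := X_pow_dvd_iff.mp h (p ^ s) (Nat.pow_lt_pow_right hp.one_lt hsr)
  rw [mul_one] at hcoeff
  rw [coeff_sub, hexpand, hcoeff, coeff_one, if_neg (pow_pos hp.pos s).ne', sub_zero,
    CharP.cast_eq_zero_iff R p] at hvanish
  exact hpe hvanish

end Polynomial

section
variable {F : Type*} [Field F] {q : ℕ}

theorem sigAct18_X (i : Fin (q + 1)) :
    sigAct18 q (X i : MvPolynomial (Fin (q + 1)) F) = X i +
      if _ : 0 < (i : ℕ) ∧ (i : ℕ) < q then
        X ⟨(i : ℕ) - 1, lt_of_le_of_lt (Nat.sub_le _ _) i.isLt⟩ else 0 := aeval_X _ _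

theorem alpAct18_X (lam : F) (i : Fin (q + 1)) :
    alpAct18 q lam (X i) = if (i : ℕ) < q then X i else C lam * X i := aeval_X _ _

theorem sigAct18_X_last :
    sigAct18 q (X (Fin.last q) : MvPolynomial (Fin (q + 1)) F) = X (Fin.last q) := by
  simp [sigAct18_X]

theorem sigAct18_sub_one_pow_X (i : Fin (q + 1)) :
    (((sigAct18 q).toLinearMap - 1) ^ ((i : ℕ) + 1)) (X i : MvPolynomial (Fin (q + 1)) F) =
      0 := by
  suffices h : ∀ n (i : Fin (q + 1)), (i : ℕ) = n →
      (((sigAct18 q).toLinearMap - 1) ^ (n + 1)) (X i : MvPolynomial (Fin (q + 1)) F) = 0 from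
    h _ i rfl
  intro n
  induction n with
  | zero =>
    intro i hi
    simp [sigAct18_X, hi]
  | succ n ih =>
    intro i hi
    rw [pow_succ, Module.End.mul_apply]
    simp only [LinearMap.sub_apply, AlgHom.toLinearMap_apply, sigAct18_X, Module.End.one_apply,
      add_sub_cancel_left]
    split_ifs
    · exact ih _ (by simp only; omega)
    · exact map_zero _

theorem sigAct18_pow_eq_one {p : ℕ} [Fact p.Prime] [CharP F p] (r : ℕ) :
    sigAct18 (F := F) (p ^ r) ^ p ^ r = 1 := by
  set L := (sigAct18 (F := F) (p ^ r)).toLinearMap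
  have : CharP (Module.End F (MvPolynomial (Fin (p ^ r + 1)) F)) p :=
    charP_of_injective_algebraMap' F p
  have hL : L ^ p ^ r = 1 + (L - 1) ^ p ^ r := by
    simpa using add_pow_char_pow_of_commute (p := p) (n := r) (Commute.one_left (L - 1))
  have hcoe : ⇑(sigAct18 (F := F) (p ^ r) ^ p ^ r) = ⇑(L ^ p ^ r) := by
    rw [AlgHom.coe_pow, Module.End.coe_pow]; rfl
  refine MvPolynomial.algHom_ext fun i => ?_
  rw [AlgHom.one_apply]
  rcases lt_or_eq_of_le (Nat.lt_succ_iff.mp i.isLt) with hi | hi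
  · have hvanish : ∀ k, ((L - 1) ^ (k + ((i : ℕ) + 1))) (X i) = 0 := fun k => by
      rw [pow_add, Module.End.mul_apply, sigAct18_sub_one_pow_X, map_zero]
    have := hvanish (p ^ r - ((i : ℕ) + 1))
    rw [Nat.sub_add_cancel hi] at this
    rw [hcoe, hL, LinearMap.add_apply, Module.End.one_apply, this, add_zero]
  · obtain rfl : i = Fin.last _ := Fin.ext hi
    rw [AlgHom.coe_pow]
    exact Function.iterate_fixed sigAct18_X_last _

theorem alpAct18_comm_sigAct18 (lam : F) : Commute (alpAct18 q lam) (sigAct18 q) := by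
  refine MvPolynomial.algHom_ext fun i => ?_
  rcases (Nat.lt_succ_iff.mp i.isLt).lt_or_eq with hi | hi
  · simp only [AlgHom.mul_apply, sigAct18_X, alpAct18_X, if_pos hi, map_add]
    split_ifs
    · rw [alpAct18_X, if_pos (by simp only; omega)]
    · rw [map_zero]
  · obtain rfl : i = Fin.last q := Fin.ext hi
    simp [sigAct18_X_last, alpAct18_X, algHom_C]

theorem eval_sigAct18 (v : Fin (q + 1) → F) (f : MvPolynomial (Fin (q + 1)) F) :
    eval v (sigAct18 q f) = eval (fun i => v i + if _ : 0 < (i : ℕ) ∧ (i : ℕ) < q then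
      v ⟨(i : ℕ) - 1, lt_of_le_of_lt (Nat.sub_le _ _) i.isLt⟩ else 0) f := by
  rw [← aeval_eq_eval, aeval_algHom_apply, aeval_eq_eval]
  refine congrArg (eval · f) (funext fun i => ?_)
  rw [sigAct18_X]
  split_ifs <;> simp

theorem eval_sigAct18_pow_X {j : Fin (q + 1)} {v : Fin (q + 1) → F}
    (hv : ∀ i < j, v i = 0) (k : ℕ) : eval v ((sigAct18 q ^ k) (X j)) = v j := by
  induction k generalizing v with
  | zero => simp
  | succ k ih =>
    rw [pow_succ', AlgHom.mul_apply, eval_sigAct18, ih]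
    · split_ifs
      · rw [hv ⟨(j : ℕ) - 1, by omega⟩ (Fin.lt_def.mpr (by simp only; omega)), add_zero]
      · rw [add_zero]
    · intro i hi
      split_ifs
      · rw [Fin.lt_def] at hi
        rw [hv i hi, hv ⟨(i : ℕ) - 1, by omega⟩ (Fin.lt_def.mpr (by simp only; omega)),
          add_zero]
      · rw [hv i hi, add_zero]

theorem isHomogeneous_sigAct18_pow_X (k : ℕ) (j : Fin (q + 1)) :
    ((sigAct18 q ^ k) (X j : MvPolynomial (Fin (q + 1)) F)).IsHomogeneous 1 := by
  induction k with
  | zero => exact isHomogeneous_X _ _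
  | succ k ih =>
    rw [pow_succ', AlgHom.mul_apply]
    refine ih.aeval _ fun i => (isHomogeneous_X _ _).add ?_
    split_ifs
    · exact isHomogeneous_X _ _
    · exact isHomogeneous_zero _ _ _

noncomputable def sigNorm18 (q : ℕ) (j : Fin (q + 1)) : MvPolynomial (Fin (q + 1)) F :=
  ∏ k ∈ Finset.range q, (sigAct18 q ^ k) (X j)

theorem isHomogeneous_sigNorm18 (j : Fin (q + 1)) :
    (sigNorm18 (F := F) q j).IsHomogeneous q := by
  simpa [sigNorm18] using IsHomogeneous.prod (Finset.range q) _ (fun _ => 1) fun k _ =>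
    isHomogeneous_sigAct18_pow_X (F := F) k j

theorem sigAct18_sigNorm18 (hσ : sigAct18 (F := F) q ^ q = 1) (j : Fin (q + 1)) :
    sigAct18 q (sigNorm18 q j) = sigNorm18 (F := F) q j := by
  rcases Nat.eq_zero_or_pos q with rfl | hq
  · simp [sigNorm18]
  obtain ⟨n, rfl⟩ := Nat.exists_eq_add_one.mpr hq
  simp_rw [sigNorm18, map_prod, ← AlgHom.mul_apply, ← pow_succ']
  rw [Finset.prod_range_succ, hσ, Finset.prod_range_succ' _ n, pow_zero]

theorem alpAct18_sigNorm18 (lam : F) {j : Fin (q + 1)} (hj : (j : ℕ) < q) :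
    alpAct18 q lam (sigNorm18 q j) = sigNorm18 q j := by
  refine (map_prod _ _ _).trans (Finset.prod_congr rfl fun k _ => ?_)
  rw [← AlgHom.mul_apply, ((alpAct18_comm_sigAct18 lam).pow_right k).eq, AlgHom.mul_apply,
    alpAct18_X, if_pos hj]

theorem eval_sigNorm18 {j : Fin (q + 1)} {v : Fin (q + 1) → F} (hv : ∀ i < j, v i = 0) :
    eval v (sigNorm18 q j) = v j ^ q := by
  rw [sigNorm18, map_prod, Finset.prod_congr rfl fun k _ => eval_sigAct18_pow_X hv k,
    Finset.prod_const, Finset.card_range]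

def invariantDegrees18 (q : ℕ) (lam : F) (v : Fin (q + 1) → F) : Set ℕ :=
  {d : ℕ | 0 < d ∧ ∃ f : MvPolynomial (Fin (q + 1)) F,
    sigAct18 q f = f ∧ alpAct18 q lam f = f ∧ f.IsHomogeneous d ∧ eval v f ≠ 0}

theorem exists_mem_invariantDegrees18_le (hσ : sigAct18 (F := F) q ^ q = 1) (hq : 0 < q)
    {lam : F} {m : ℕ} (hm : 0 < m) (hlam : lam ^ m = 1) {v : Fin (q + 1) → F} (hv : v ≠ 0) :
    ∃ d ∈ invariantDegrees18 q lam v, d ≤ max q m := by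
  obtain ⟨j, hj, hjmin⟩ := wellFounded_lt.has_min {i | v i ≠ 0} (Function.ne_iff.mp hv)
  have hbelow : ∀ i < j, v i = 0 := fun i hi => by_contra fun h => hjmin i h hi
  rcases (Nat.lt_succ_iff.mp j.isLt).lt_or_eq with hjq | hjq
  · refine ⟨q, ⟨hq, sigNorm18 q j, sigAct18_sigNorm18 hσ j,
      alpAct18_sigNorm18 lam hjq, isHomogeneous_sigNorm18 j, ?_⟩, le_max_left _ _⟩
    rw [eval_sigNorm18 hbelow]
    exact pow_ne_zero _ hj
  · obtain rfl : j = Fin.last q := Fin.ext hjq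
    refine ⟨m, ⟨hm, X (Fin.last q) ^ m, by rw [map_pow, sigAct18_X_last], ?_,
      isHomogeneous_X_pow _ _, by rw [map_pow, eval_X]; exact pow_ne_zero _ hj⟩,
      le_max_right _ _⟩
    rw [map_pow, alpAct18_X, if_neg (by simp), mul_pow, ← C_pow, hlam, C_1, one_mul]

theorem dvd_of_mem_invariantDegrees18_single_last {lam : F} {m : ℕ}
    (hlam : IsPrimitiveRoot lam m) {d : ℕ}
    (hd : d ∈ invariantDegrees18 q lam (Pi.single (Fin.last q) 1)) : m ∣ d := by
  obtain ⟨-, f, -, hα, hh, hev⟩ := hd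
  have hscale := aeval_eq_pow_mul_of_map_eq_self hh hα (c := lam)
    (w := Pi.single (Fin.last q) 1) fun i => by
      rw [alpAct18_X]
      split_ifs with hi
      · simp [Fin.ext_iff, hi.ne]
      · simp
  rw [aeval_eq_eval] at hscale
  rw [← hlam.pow_eq_one_iff_dvd]
  exact mul_right_cancel₀ hev (hscale.symm.trans (one_mul _).symm)

theorem X_pow_dvd_of_mem_invariantDegrees18_single (hq : 0 < q) {lam : F} {d : ℕ}
    (hd : d ∈ invariantDegrees18 q lam (Pi.single ⟨q - 1, by omega⟩ 1)) :
    (Polynomial.X : Polynomial F) ^ q ∣ (1 + Polynomial.X) ^ d - 1 := by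
  obtain ⟨-, f, hσ, -, hh, hev⟩ := hd
  obtain ⟨n, rfl⟩ := Nat.exists_eq_add_one.mpr hq
  set π := Ideal.Quotient.mkₐ F (Ideal.span {(Polynomial.X : Polynomial F) ^ (n + 1)})
  set w : Fin (n + 2) → Polynomial F := fun i =>
    if (i : ℕ) ≤ n then Polynomial.X ^ (n - i) else 0
  have htn : π Polynomial.X ^ (n + 1) = 0 := by
    rw [← map_pow, Ideal.Quotient.mkₐ_eq_mk, Ideal.Quotient.eq_zero_iff_mem]
    exact Ideal.subset_span rfl
  have hw : ∀ i, aeval (fun i => π (w i)) (sigAct18 (n + 1) (X i : MvPolynomial _ F)) =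
      (1 + π Polynomial.X) * π (w i) := by
    intro i
    have hwπ (j : Fin (n + 2)) (hj : (j : ℕ) ≤ n) : π (w j) = π Polynomial.X ^ (n - j) := by
      simp only [w, if_pos hj, map_pow]
    rw [sigAct18_X]
    rcases (Nat.lt_succ_iff.mp i.isLt).lt_or_eq with hi | hi
    · rcases Nat.eq_zero_or_pos (i : ℕ) with hi0 | hi0
      · rw [dif_neg (by omega), add_zero, aeval_X, hwπ i (by omega), hi0, Nat.sub_zero,
          add_mul, one_mul, ← pow_succ', htn, add_zero]
      · rw [dif_pos ⟨hi0, hi⟩, map_add, aeval_X, aeval_X, hwπ i (by omega),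
          hwπ ⟨(i : ℕ) - 1, by omega⟩ (by simp only; omega),
          show n - (↑i - 1) = n - ↑i + 1 by omega]
        ring
    · simp [w, hi]
  have hscale := aeval_eq_pow_mul_of_map_eq_self hh hσ hw
  rw [← comp_aeval_apply] at hscale
  have hdvd : Polynomial.X ^ (n + 1) ∣ ((1 + Polynomial.X) ^ d - 1) * aeval w f := by
    rw [← Ideal.mem_span_singleton, ← Ideal.Quotient.eq_zero_iff_mem,
      ← Ideal.Quotient.mkₐ_eq_mk F, map_mul, map_sub, map_pow, map_add, map_one, sub_mul,
      one_mul, ← hscale, sub_self]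
  have hconst : Polynomial.eval 0 (aeval w f) = eval (Pi.single ⟨n + 1 - 1, by omega⟩ 1) f := by
    rw [← Polynomial.coe_aeval_eq_eval, comp_aeval_apply, aeval_eq_eval]
    congr
    funext i
    simp only [w, Pi.single_apply, Fin.ext_iff, Nat.add_sub_cancel]
    split_ifs <;> simp [zero_pow_eq, Nat.sub_eq_zero_iff_le] <;> omega
  refine Polynomial.prime_X.pow_dvd_of_dvd_mul_right _ ?_ hdvd
  rwa [Polynomial.X_dvd_iff, Polynomial.coeff_zero_eq_eval_zero, hconst]

theorem le_eps18_of_forall_dvd {lam : F} {v : Fin (q + 1) → F} {n : ℕ}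
    (hne : (invariantDegrees18 q lam v).Nonempty)
    (hdvd : ∀ d ∈ invariantDegrees18 q lam v, n ∣ d) : n ≤ eps18 q lam v :=
  le_csInf hne fun d hd => Nat.le_of_dvd hd.1 (hdvd d hd)

theorem gamma18_eq_max {lam : F} {a b : ℕ} (hub : ∀ v, v ≠ 0 → eps18 q lam v ≤ max a b)
    {va vb : Fin (q + 1) → F} (hva : va ≠ 0) (ha : a ≤ eps18 q lam va) (hvb : vb ≠ 0)
    (hb : b ≤ eps18 q lam vb) : gamma18 q lam = max a b := by
  have hbdd : BddAbove {e | ∃ v : Fin (q + 1) → F, v ≠ 0 ∧ e = eps18 q lam v} := by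
    refine ⟨max a b, ?_⟩
    rintro _ ⟨v, hv, rfl⟩
    exact hub v hv
  refine le_antisymm (csSup_le ⟨_, va, hva, rfl⟩ ?_) (max_le ?_ ?_)
  · rintro _ ⟨v, hv, rfl⟩
    exact hub v hv
  · exact le_csSup_of_le hbdd ⟨va, hva, rfl⟩ ha
  · exact le_csSup_of_le hbdd ⟨vb, hvb, rfl⟩ hb

end

theorem stmt18_general {F : Type*} [Field F] {p : ℕ} (hp : p.Prime) [CharP F p]
    (r m : ℕ) (hr : 0 < r) (hm1 : 1 < m)
    (lam : F) (hlam : IsPrimitiveRoot lam m) :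
    gamma18 (F := F) (p ^ r) lam = max (p ^ r) m ∧ max (p ^ r) m < p ^ r * m := by
  have : Fact p.Prime := ⟨hp⟩
  have hq : 1 < p ^ r := Nat.one_lt_pow hr.ne' hp.one_lt
  have hexists (v : Fin (p ^ r + 1) → F) (hv : v ≠ 0) :
      ∃ d ∈ invariantDegrees18 (p ^ r) lam v, d ≤ max (p ^ r) m :=
    exists_mem_invariantDegrees18_le (sigAct18_pow_eq_one r) (by omega) (by omega)
      hlam.pow_eq_one hv
  have heps_le (v : Fin (p ^ r + 1) → F) (hv : v ≠ 0) : eps18 (p ^ r) lam v ≤ max (p ^ r) m :=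
    let ⟨_, hd, hle⟩ := hexists v hv
    (Nat.sInf_le hd).trans hle
  have hq_le : p ^ r ≤ eps18 (p ^ r) lam (Pi.single ⟨p ^ r - 1, by omega⟩ 1) :=
    le_eps18_of_forall_dvd ((hexists _ (by simp)).imp fun _ hd => hd.1) fun _ hd =>
      Polynomial.pow_dvd_of_X_pow_dvd_one_add_X_pow_sub_one
        (X_pow_dvd_of_mem_invariantDegrees18_single (by omega) hd)
  have hm_le : m ≤ eps18 (p ^ r) lam (Pi.single (Fin.last _) 1) :=
    le_eps18_of_forall_dvd ((hexists _ (by simp)).imp fun _ hd => hd.1) fun _ hd =>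
      dvd_of_mem_invariantDegrees18_single_last hlam hd
  exact ⟨gamma18_eq_max heps_le (by simp) hq_le (by simp) hm_le,
    max_lt (lt_mul_of_one_lt_right (by omega) hm1) (lt_mul_of_one_lt_left (by omega) hq)⟩

theorem stmt18 {F : Type*} [Field F] [IsAlgClosed F] {p : ℕ} (hp : p.Prime) [CharP F p]
    (r m : ℕ) (hr : 0 < r) (hm1 : 1 < m) (hcop : Nat.Coprime p m)
    (lam : F) (hlam : IsPrimitiveRoot lam m) :
    gamma18 (F := F) (p ^ r) lam = max (p ^ r) m ∧ max (p ^ r) m < p ^ r * m :=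
  stmt18_general hp r m hr hm1 lam hlam
end
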